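/- arXiv:2509.09589 — 2 statements merged into one kernel-verified Lean document; each statement's English description precedes it below -/
import Mathlib

section
/- There exists a constant C > 0 depending only on d and L such that for every ε ∈ (0,1), the largest connected component C_1^{(n)}(−ε) of the random graph with edge probabilities 1 − exp(−(1−ε)·ζ_n^{−1}·J(x,y)) satisfies P( |C_1^{(n)}(−ε)| ≤ C·n·ε^{−2} ) → 1 as n → ∞. -/
open MeasureTheory ProbabilityTheory Filter Finset
open scoped ENNReal Classical

noncomputable section

/-- The hierarchical lattice `H^d_L`: the direct sum of countably many copies of `(ZMod L)^d`. -/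
abbrev HLat (d L : ℕ) : Type := ℕ →₀ (Fin d → ZMod L)

/-- `hnorm x = 0` if `x = 0`, and `hnorm x = L^(i+1)` if `x i ≠ 0` and `x j = 0` for `j > i`
(coordinates indexed from `0`, matching the paper's indexing from `1`). -/
def hnorm {d L : ℕ} (x : HLat d L) : ℕ :=
  x.support.sup fun i => L ^ (i + 1)

/-- The ball `Λ_n = {x : ‖x‖ ≤ L^n}`. -/
def Lambda (d L n : ℕ) : Set (HLat d L) := {x | hnorm x ≤ L ^ n}

/-- The defining equation for `ζ_n`:
`(L^d - 1) · ∑_{i=1}^n L^((i-1)d) exp(-z⁻¹ ρ(L^i)) = L^(nd) - 2`. -/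
def zetaEq (d L : ℕ) (ρ : ℝ → ℝ) (n : ℕ) (z : ℝ) : Prop :=
  ((L : ℝ) ^ d - 1) *
      ∑ i ∈ Finset.Icc 1 n, (L : ℝ) ^ ((i - 1) * d) * Real.exp (-z⁻¹ * ρ ((L : ℝ) ^ i))
    = (L : ℝ) ^ (n * d) - 2

/-- The percolation graph on the vertex set `Λ` determined by the boolean edge configuration `e`:
distinct `x, y ∈ Λ` are adjacent iff the edge indicator of the (unordered) pair is `true`. -/
def graphOf {V : Type*} (Λ : Set V) (e : Sym2 V → Bool) : SimpleGraph V where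
  Adj x y := x ≠ y ∧ x ∈ Λ ∧ y ∈ Λ ∧ e s(x, y) = true
  symm := by
    constructor
    rintro x y ⟨h1, h2, h3, h4⟩
    refine ⟨h1.symm, h3, h2, ?_⟩
    rwa [Sym2.eq_swap]
  loopless := by constructor; rintro x ⟨h, -⟩; exact h rfl

/-- The number of vertices in the connected component of `x`. -/
def compSize {V : Type*} (G : SimpleGraph V) (x : V) : ℕ := Set.ncard {y | G.Reachable x y}

/-!
Exploring the cluster of a vertex is dominated by a branching process: if every vertex has
expected degree at most `μ` and `z · exp (μ (g - 1)) ≤ g`, then `E z^|C(x)| ≤ g`. This is proved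
for all finite vertex sets at once, by induction, splitting off the root of a cluster and
conditioning on the cluster of one source at a time, whose complement carries independent edges.

In the hierarchical model the equation defining `ζ_n` says exactly that the expected degree at
`t = 0` is `1`, and the tail bounds on `ρ` make every rate `ζ_n⁻¹ ρ(L^i)` of order
`L^{-(n-1)(d-α)}`. Hence at `t = -ε` the expected degree is at most `(1 - ε)(1 + o(1)) ≤ 1 - ε/2`,
and `z = exp (ε²/16)`, `g = 1 + ε/4` are admissible. Markov's inequality and a union bound over
the `L^{nd}` vertices then bound the probability that some cluster exceeds
`16 (d log L + 1) n / ε²` by `(1 + ε/4) e^{-n}`.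
-/

namespace RandomSubset

variable {α : Type*} [DecidableEq α] (p : α → ℝ)

/-- The probability that the random subset of `E` containing each `e` independently with
probability `p e` is `T`. -/
def weight (E T : Finset α) : ℝ := (∏ e ∈ T, p e) * ∏ e ∈ E \ T, (1 - p e)

def expectation (E : Finset α) (f : Finset α → ℝ) : ℝ := ∑ T ∈ E.powerset, weight p E T * f T

variable {p} {E E₁ E₂ : Finset α}

theorem weight_eq_prod {T : Finset α} (hT : T ⊆ E) :
    weight p E T = ∏ e ∈ E, if e ∈ T then p e else 1 - p e := by
  rw [weight, Finset.prod_ite, Finset.filter_mem_eq_inter, Finset.inter_eq_right.2 hT,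
    Finset.sdiff_eq_filter]

theorem expectation_pow_card (g : ℝ) (E : Finset α) :
    expectation p E (fun T => g ^ T.card) = ∏ e ∈ E, (1 + p e * (g - 1)) := by
  have h := Finset.prod_add (fun e => p e * g) (fun e => 1 - p e) E
  simp only [Finset.prod_mul_distrib, Finset.prod_const] at h
  rw [expectation, Finset.prod_congr rfl fun e _ =>
    show 1 + p e * (g - 1) = p e * g + (1 - p e) by ring, h]
  exact Finset.sum_congr rfl fun T _ => by rw [weight]; ring

theorem expectation_const_mul (c : ℝ) (f : Finset α → ℝ) :
    expectation p E (fun T => c * f T) = c * expectation p E f := by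
  rw [expectation, expectation, Finset.mul_sum]
  exact Finset.sum_congr rfl fun T _ => by ring

theorem expectation_const (E : Finset α) (c : ℝ) : expectation p E (fun _ => c) = c := by
  have h := expectation_pow_card (p := p) 1 E
  simp only [one_pow, sub_self, mul_zero, add_zero, Finset.prod_const_one] at h
  simpa [h] using expectation_const_mul (p := p) (E := E) c fun _ => 1

theorem expectation_congr {f g : Finset α → ℝ} (h : ∀ T ⊆ E, f T = g T) :
    expectation p E f = expectation p E g :=
  Finset.sum_congr rfl fun T hT => by rw [h T (Finset.mem_powerset.1 hT)]

theorem weight_nonneg (hp : ∀ e, 0 ≤ p e ∧ p e ≤ 1) (E T : Finset α) : 0 ≤ weight p E T :=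
  mul_nonneg (Finset.prod_nonneg fun e _ => (hp e).1)
    (Finset.prod_nonneg fun e _ => sub_nonneg.2 (hp e).2)

theorem expectation_mono (hp : ∀ e, 0 ≤ p e ∧ p e ≤ 1) {f g : Finset α → ℝ}
    (h : ∀ T ⊆ E, f T ≤ g T) : expectation p E f ≤ expectation p E g :=
  Finset.sum_le_sum fun T hT =>
    mul_le_mul_of_nonneg_left (h T (Finset.mem_powerset.1 hT)) (weight_nonneg hp E T)

theorem expectation_nonneg (hp : ∀ e, 0 ≤ p e ∧ p e ≤ 1) {f : Finset α → ℝ}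
    (h : ∀ T ⊆ E, 0 ≤ f T) : 0 ≤ expectation p E f := by
  simpa [expectation_const] using expectation_mono (E := E) hp (f := fun _ => 0) h

theorem expectation_eq_sum_ite {β : Type*} [DecidableEq β] (f : Finset α → ℝ)
    (φ : Finset α → β) {I : Finset β} (hφ : ∀ T ⊆ E, φ T ∈ I) :
    expectation p E f = ∑ b ∈ I, expectation p E (fun T => if φ T = b then f T else 0) := by
  simp only [expectation, mul_ite, mul_zero]
  rw [Finset.sum_comm]
  refine Finset.sum_congr rfl fun T hT => ?_
  rw [Finset.sum_ite_eq, if_pos (hφ T (Finset.mem_powerset.1 hT))]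

theorem union_inter_eq_left_of_disjoint (hE : Disjoint E₁ E₂) {T₁ T₂ : Finset α}
    (h₁ : T₁ ⊆ E₁) (h₂ : T₂ ⊆ E₂) : (T₁ ∪ T₂) ∩ E₁ = T₁ := by
  rw [Finset.union_inter_distrib_right, Finset.inter_eq_left.2 h₁,
    Finset.disjoint_iff_inter_eq_empty.1 (hE.symm.mono_left h₂), Finset.union_empty]

theorem weight_union (hE : Disjoint E₁ E₂) {T₁ T₂ : Finset α} (h₁ : T₁ ⊆ E₁) (h₂ : T₂ ⊆ E₂) :
    weight p (E₁ ∪ E₂) (T₁ ∪ T₂) = weight p E₁ T₁ * weight p E₂ T₂ := by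
  rw [weight_eq_prod (Finset.union_subset_union h₁ h₂), weight_eq_prod h₁,
    weight_eq_prod h₂, Finset.prod_union hE]
  congr 1 <;> refine Finset.prod_congr rfl fun e he => ?_
  · have : e ∉ T₂ := fun h => Finset.disjoint_left.1 hE he (h₂ h)
    simp [this]
  · have : e ∉ T₁ := fun h => Finset.disjoint_right.1 hE he (h₁ h)
    simp [this]

theorem expectation_union (hE : Disjoint E₁ E₂) (f : Finset α → ℝ) :
    expectation p (E₁ ∪ E₂) f
      = expectation p E₁ (fun T₁ => expectation p E₂ (fun T₂ => f (T₁ ∪ T₂))) := by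
  simp only [expectation, Finset.mul_sum, ← Finset.sum_product']
  refine Finset.sum_bij' (fun T _ => (T ∩ E₁, T ∩ E₂)) (fun q _ => q.1 ∪ q.2) ?_ ?_ ?_ ?_ ?_
  · intro T _
    simp
  · intro q hq
    simp only [Finset.mem_product, Finset.mem_powerset] at hq ⊢
    exact Finset.union_subset_union hq.1 hq.2
  · intro T hT
    rw [← Finset.inter_union_distrib_left, Finset.inter_eq_left.2 (Finset.mem_powerset.1 hT)]
  · intro q hq
    simp only [Finset.mem_product, Finset.mem_powerset] at hq
    ext1
    · exact union_inter_eq_left_of_disjoint hE hq.1 hq.2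
    · rw [Finset.union_comm]
      exact union_inter_eq_left_of_disjoint hE.symm hq.2 hq.1
  · intro T hT
    rw [← mul_assoc, ← weight_union hE Finset.inter_subset_right Finset.inter_subset_right,
      ← Finset.inter_union_distrib_left, Finset.inter_eq_left.2 (Finset.mem_powerset.1 hT)]

theorem expectation_mul_of_disjoint (hE : Disjoint E₁ E₂) {f g : Finset α → ℝ}
    (hf : ∀ T, f T = f (T ∩ E₁)) (hg : ∀ T, g T = g (T ∩ E₂)) :
    expectation p (E₁ ∪ E₂) (fun T => f T * g T) = expectation p E₁ f * expectation p E₂ g := by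
  rw [expectation_union hE]
  calc _ = expectation p E₁ (fun T₁ => expectation p E₂ g * f T₁) := by
        refine expectation_congr fun T₁ h₁ => ?_
        rw [mul_comm, ← expectation_const_mul]
        refine expectation_congr fun T₂ h₂ => ?_
        rw [hf, hg, union_inter_eq_left_of_disjoint hE h₁ h₂, Finset.union_comm,
          union_inter_eq_left_of_disjoint hE.symm h₂ h₁]
    _ = _ := by rw [expectation_const_mul, mul_comm]

theorem expectation_of_subset {E' : Finset α} (hE : E' ⊆ E) {f : Finset α → ℝ}
    (hf : ∀ T, f T = f (T ∩ E')) : expectation p E f = expectation p E' f := by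
  have h := expectation_mul_of_disjoint (p := p) (g := fun _ => 1)
    (Finset.disjoint_sdiff (s := E') (t := E)) hf fun _ => rfl
  simpa [expectation_const, Finset.union_sdiff_of_subset hE] using h

theorem expectation_ite_lt_le (hp : ∀ e, 0 ≤ p e ∧ p e ≤ 1) {θ : ℝ} (hθ : 0 ≤ θ)
    (h : Finset α → ℕ) (K : ℝ) :
    expectation p E (fun T => if K < h T then 1 else 0)
      ≤ Real.exp (-(θ * K)) * expectation p E (fun T => Real.exp θ ^ h T) := by
  rw [← expectation_const_mul]
  refine expectation_mono hp fun T _ => ?_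
  rw [← Real.exp_nat_mul, ← Real.exp_add]
  split_ifs with hK
  · exact Real.one_le_exp (by nlinarith)
  · exact (Real.exp_pos _).le

variable {Ω : Type*} {X : α → Ω → Bool}

theorem setOf_filter_eq {T : Finset α} (hT : T ⊆ E) :
    {ω | E.filter (fun e => X e ω = true) = T} = ⋂ e ∈ E, X e ⁻¹' {decide (e ∈ T)} := by
  ext ω
  simp only [Set.mem_ofPred_eq, Set.mem_iInter, Set.mem_preimage, Set.mem_singleton_iff]
  constructor
  · rintro rfl e he
    simp [he]
  · intro h
    ext e
    by_cases he : e ∈ E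
    · simp only [Finset.mem_filter, he, true_and, h e he, decide_eq_true_eq]
    · simp only [Finset.mem_filter, he, false_and, false_iff]
      exact fun heT => he (hT heT)

variable [MeasurableSpace Ω] {P : Measure Ω} [IsProbabilityMeasure P]

theorem measure_filter_eq (hX : ∀ e, Measurable (X e)) (hindep : iIndepFun X P)
    (hp : ∀ e, 0 ≤ p e ∧ p e ≤ 1) (hdist : ∀ e ∈ E, P {ω | X e ω = true} = ENNReal.ofReal (p e))
    {T : Finset α} (hT : T ⊆ E) :
    P {ω | E.filter (fun e => X e ω = true) = T} = ENNReal.ofReal (weight p E T) := by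
  have hmarg : ∀ e ∈ E, P (X e ⁻¹' {decide (e ∈ T)})
      = ENNReal.ofReal (if e ∈ T then p e else 1 - p e) := by
    intro e he
    by_cases heT : e ∈ T
    · simp only [heT, decide_true, if_true]
      exact hdist e he
    · have hcompl : X e ⁻¹' {false} = {ω | X e ω = true}ᶜ := by ext; simp
      simp only [heT, decide_false, if_false, hcompl]
      rw [prob_compl_eq_one_sub (s := {ω | X e ω = true}) (hX e (measurableSet_singleton true)),
        hdist e he, ENNReal.ofReal_sub _ (hp e).1, ENNReal.ofReal_one]
  rw [setOf_filter_eq hT, hindep.meas_biInter fun e _ => ⟨_, measurableSet_singleton _, rfl⟩,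
    Finset.prod_congr rfl hmarg, ← ENNReal.ofReal_prod_of_nonneg, weight_eq_prod hT]
  intro e _
  split_ifs
  exacts [(hp e).1, sub_nonneg.2 (hp e).2]

theorem measure_setOf_filter (hX : ∀ e, Measurable (X e)) (hindep : iIndepFun X P)
    (hp : ∀ e, 0 ≤ p e ∧ p e ≤ 1) (hdist : ∀ e ∈ E, P {ω | X e ω = true} = ENNReal.ofReal (p e))
    (Q : Finset α → Prop) :
    P {ω | Q (E.filter fun e => X e ω = true)}
      = ENNReal.ofReal (expectation p E fun T => if Q T then 1 else 0) := by
  have hunion : {ω | Q (E.filter fun e => X e ω = true)}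
      = ⋃ T ∈ E.powerset.filter Q, {ω | E.filter (fun e => X e ω = true) = T} := by
    ext ω
    simp
  rw [hunion, measure_biUnion_finset, Finset.sum_congr rfl fun T hT =>
      measure_filter_eq hX hindep hp hdist (Finset.mem_powerset.1 (Finset.mem_filter.1 hT).1),
    ← ENNReal.ofReal_sum_of_nonneg fun T _ => weight_nonneg hp E T, expectation,
    Finset.sum_filter]
  · simp only [mul_ite, mul_one, mul_zero]
  · exact fun T _ T' _ hne => Set.disjoint_left.2 fun ω h h' => hne (h.symm.trans h')
  · intro T hT
    rw [setOf_filter_eq (Finset.mem_powerset.1 (Finset.mem_filter.1 hT).1)]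
    exact Finset.measurableSet_biInter _ fun e _ => hX e (measurableSet_singleton _)

end RandomSubset

namespace Percolation

open RandomSubset

variable {V : Type*}

def Adj (S : Finset V) (T : Finset (Sym2 V)) (u v : V) : Prop :=
  u ≠ v ∧ u ∈ S ∧ v ∈ S ∧ s(u, v) ∈ T

def Reach (S : Finset V) (T : Finset (Sym2 V)) : V → V → Prop :=
  Relation.ReflTransGen (Adj S T)

def cluster (S : Finset V) (T : Finset (Sym2 V)) (A : Finset V) : Finset V :=
  S.filter fun v => ∃ a ∈ A, Reach S T a v

variable {S S' A A' K : Finset V} {T T' : Finset (Sym2 V)} {a u v x : V}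

theorem Reach.mono (hS : S ⊆ S') (hT : T ⊆ T') (h : Reach S T u v) : Reach S' T' u v :=
  Relation.ReflTransGen.mono (fun _ _ ⟨huv, hu, hv, he⟩ => ⟨huv, hS hu, hS hv, hT he⟩) _ _ h

theorem Reach.mem (h : Reach S T u v) (hu : u ∈ S) : v ∈ S := by
  induction h with
  | refl => exact hu
  | tail _ h _ => exact h.2.2.1

theorem adj_eq_of_forall_mem_iff (h : ∀ u ∈ S, ∀ v ∈ S, u ≠ v → (s(u, v) ∈ T ↔ s(u, v) ∈ T')) :
    Adj S T = Adj S T' := by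
  ext u v
  exact and_congr_right fun huv => and_congr_right fun hu => and_congr_right fun hv =>
    h u hu v hv huv

theorem mem_cluster : v ∈ cluster S T A ↔ v ∈ S ∧ ∃ a ∈ A, Reach S T a v :=
  Finset.mem_filter

theorem mem_cluster_singleton : v ∈ cluster S T {a} ↔ v ∈ S ∧ Reach S T a v := by
  simp [mem_cluster]

theorem cluster_subset : cluster S T A ⊆ S := Finset.filter_subset _ _

theorem mem_cluster_self (ha : a ∈ S) (haA : a ∈ A) : a ∈ cluster S T A :=
  mem_cluster.2 ⟨ha, a, haA, .refl⟩

theorem mem_cluster_of_adj (hu : u ∈ cluster S T A) (h : Adj S T u v) : v ∈ cluster S T A := by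
  obtain ⟨-, b, hb, hbu⟩ := mem_cluster.1 hu
  exact mem_cluster.2 ⟨h.2.2.1, b, hb, hbu.tail h⟩

theorem cluster_mono (hS : S ⊆ S') (hA : A ⊆ A') : cluster S T A ⊆ cluster S' T A' := by
  intro v hv
  obtain ⟨hvS, b, hb, hbv⟩ := mem_cluster.1 hv
  exact mem_cluster.2 ⟨hS hvS, b, hA hb, hbv.mono hS subset_rfl⟩

theorem cluster_congr (h : ∀ u ∈ S, ∀ v ∈ S, u ≠ v → (s(u, v) ∈ T ↔ s(u, v) ∈ T')) :
    cluster S T A = cluster S T' A := by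
  ext v
  simp only [mem_cluster, Reach, adj_eq_of_forall_mem_iff h]

theorem cluster_singleton_eq_of_eq (ha : a ∈ S) (hK : cluster S T {a} = K)
    (h : ∀ u ∈ K, ∀ v ∈ S, u ≠ v → (s(u, v) ∈ T ↔ s(u, v) ∈ T')) :
    cluster S T' {a} = K := by
  subst hK
  refine Finset.Subset.antisymm (fun v hv => ?_) (fun v hv => ?_)
  · obtain ⟨-, hav⟩ := mem_cluster_singleton.1 hv
    clear hv
    induction hav with
    | refl => exact mem_cluster_self ha (Finset.mem_singleton_self a)
    | @tail u w _ huw ih =>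
      exact mem_cluster_of_adj ih
        ⟨huw.1, huw.2.1, huw.2.2.1, (h u ih w huw.2.2.1 huw.1).2 huw.2.2.2⟩
  · obtain ⟨-, hav⟩ := mem_cluster_singleton.1 hv
    clear hv
    induction hav with
    | refl => exact mem_cluster_self ha (Finset.mem_singleton_self a)
    | @tail u w hau huw ih =>
      have hu : u ∈ cluster S T {a} := mem_cluster_singleton.2 ⟨huw.2.1, hau⟩
      exact mem_cluster_of_adj ih
        ⟨huw.1, huw.2.1, huw.2.2.1, (h u hu w huw.2.2.1 huw.1).1 huw.2.2.2⟩

variable [DecidableEq V]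

def pairs (S : Finset V) : Finset (Sym2 V) := S.sym2.filter fun e => ¬ e.IsDiag

theorem mk_mem_pairs : s(u, v) ∈ pairs S ↔ u ∈ S ∧ v ∈ S ∧ u ≠ v := by
  rw [pairs, Finset.mem_filter, Finset.mk_mem_sym2_iff, Sym2.mk_isDiag_iff, and_assoc]

theorem cluster_inter_of_pairs_subset {E : Finset (Sym2 V)} (hE : pairs S ⊆ E) :
    cluster S (T ∩ E) A = cluster S T A :=
  cluster_congr fun u hu v hv huv => by
    simp [hE (mk_mem_pairs.2 ⟨hu, hv, huv⟩)]

theorem cluster_singleton_eq_insert (hx : x ∈ S) :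
    cluster S T {x} =
      insert x (cluster (S.erase x) T ((S.erase x).filter fun y => s(x, y) ∈ T)) := by
  refine Finset.Subset.antisymm (fun v hv => ?_) (Finset.insert_subset ?_ fun v hv => ?_)
  · obtain ⟨-, hxv⟩ := mem_cluster_singleton.1 hv
    clear hv
    induction hxv with
    | refl => exact Finset.mem_insert_self _ _
    | @tail u w _ huw ih =>
      rcases Finset.mem_insert.1 ih with rfl | hu
      · have hw : w ∈ S.erase u := Finset.mem_erase.2 ⟨huw.1.symm, huw.2.2.1⟩
        exact Finset.mem_insert_of_mem
          (mem_cluster_self hw (Finset.mem_filter.2 ⟨hw, huw.2.2.2⟩))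
      · by_cases hwx : w = x
        · exact hwx ▸ Finset.mem_insert_self _ _
        · refine Finset.mem_insert_of_mem (mem_cluster_of_adj hu ⟨huw.1, ?_, ?_, huw.2.2.2⟩)
          · exact cluster_subset hu
          · exact Finset.mem_erase.2 ⟨hwx, huw.2.2.1⟩
  · exact mem_cluster_self hx (Finset.mem_singleton_self x)
  · obtain ⟨hvS, y, hy, hyv⟩ := mem_cluster.1 hv
    obtain ⟨hyS, hxy⟩ := Finset.mem_filter.1 hy
    have hxy' : Reach S T x y := .single
      ⟨(Finset.ne_of_mem_erase hyS).symm, hx, Finset.mem_of_mem_erase hyS, hxy⟩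
    exact mem_cluster_singleton.2
      ⟨Finset.mem_of_mem_erase hvS, hxy'.trans (hyv.mono (Finset.erase_subset x S) subset_rfl)⟩

theorem card_cluster_singleton (hx : x ∈ S) :
    (cluster S T {x}).card
      = (cluster (S.erase x) T ((S.erase x).filter fun y => s(x, y) ∈ T)).card + 1 := by
  rw [cluster_singleton_eq_insert hx, Finset.card_insert_of_notMem]
  exact fun h => Finset.notMem_erase x S (cluster_subset h)

theorem cluster_eq_union (haA : a ∈ A) (hAS : A ⊆ S) (hK : cluster S T {a} = K) :
    cluster S T A = K ∪ cluster (S \ K) T (A \ K) := by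
  refine Finset.Subset.antisymm (fun v hv => ?_) (Finset.union_subset ?_ ?_)
  · obtain ⟨-, b, hb, hbv⟩ := mem_cluster.1 hv
    clear hv
    induction hbv with
    | refl =>
      by_cases hbK : b ∈ K
      · exact Finset.mem_union_left _ hbK
      · exact Finset.mem_union_right _ (mem_cluster_self (Finset.mem_sdiff.2 ⟨hAS hb, hbK⟩)
          (Finset.mem_sdiff.2 ⟨hb, hbK⟩))
    | @tail u w _ huw ih =>
      by_cases hwK : w ∈ K
      · exact Finset.mem_union_left _ hwK
      rcases Finset.mem_union.1 ih with hu | hu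
      · exact absurd (hK ▸ mem_cluster_of_adj (hK ▸ hu) huw) hwK
      · refine Finset.mem_union_right _
          (mem_cluster_of_adj hu ⟨huw.1, cluster_subset hu, ?_, huw.2.2.2⟩)
        exact Finset.mem_sdiff.2 ⟨huw.2.2.1, hwK⟩
  · exact hK ▸ cluster_mono subset_rfl (Finset.singleton_subset_iff.2 haA)
  · exact cluster_mono Finset.sdiff_subset Finset.sdiff_subset

theorem card_cluster_eq_add (haA : a ∈ A) (hAS : A ⊆ S) (hK : cluster S T {a} = K) :
    (cluster S T A).card = K.card + (cluster (S \ K) T (A \ K)).card := by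
  rw [cluster_eq_union haA hAS hK, Finset.card_union_of_disjoint]
  exact Finset.disjoint_left.2 fun v hvK hv => (Finset.mem_sdiff.1 (cluster_subset hv)).2 hvK

variable {T₁ T₂ : Finset (Sym2 V)}

theorem pairs_mono (h : S ⊆ S') : pairs S ⊆ pairs S' :=
  Finset.filter_subset_filter _ (Finset.sym2_mono h)

theorem pairs_eq_union_erase (hx : x ∈ S) :
    pairs S = (S.erase x).image (fun y => s(x, y)) ∪ pairs (S.erase x) := by
  ext e
  induction e using Sym2.ind with
  | _ u v =>
    simp only [Finset.mem_union, Finset.mem_image, mk_mem_pairs, Finset.mem_erase, Sym2.eq_iff]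
    constructor
    · rintro ⟨hu, hv, huv⟩
      by_cases hux : u = x
      · exact .inl ⟨v, ⟨fun h => huv (hux.trans h.symm), hv⟩, .inl ⟨hux.symm, rfl⟩⟩
      by_cases hvx : v = x
      · exact .inl ⟨u, ⟨hux, hu⟩, .inr ⟨hvx.symm, rfl⟩⟩
      exact .inr ⟨⟨hux, hu⟩, ⟨hvx, hv⟩, huv⟩
    · rintro (⟨y, ⟨hyx, hy⟩, ⟨rfl, rfl⟩ | ⟨rfl, rfl⟩⟩ | ⟨⟨-, hu⟩, ⟨-, hv⟩, huv⟩)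
      · exact ⟨hx, hy, Ne.symm hyx⟩
      · exact ⟨hy, hx, hyx⟩
      · exact ⟨hu, hv, huv⟩

theorem disjoint_image_pairs_erase :
    Disjoint ((S.erase x).image fun y => s(x, y)) (pairs (S.erase x)) := by
  refine Finset.disjoint_left.2 fun e he he' => ?_
  obtain ⟨y, -, rfl⟩ := Finset.mem_image.1 he
  exact Finset.notMem_erase x S (mk_mem_pairs.1 he').1

theorem card_filter_mk_mem (h₁ : T₁ ⊆ (S.erase x).image fun y => s(x, y)) :
    ((S.erase x).filter fun y => s(x, y) ∈ T₁).card = T₁.card := by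
  have himage : ((S.erase x).filter fun y => s(x, y) ∈ T₁).image (fun y => s(x, y)) = T₁ := by
    ext e
    simp only [Finset.mem_image, Finset.mem_filter]
    constructor
    · rintro ⟨y, ⟨-, hy⟩, rfl⟩
      exact hy
    · intro he
      obtain ⟨y, hy, rfl⟩ := Finset.mem_image.1 (h₁ he)
      exact ⟨y, ⟨hy, he⟩, rfl⟩
  rw [← Finset.card_image_of_injective _ fun _ _ => Sym2.congr_right.1, himage]

theorem card_cluster_singleton_union (hx : x ∈ S)
    (h₁ : T₁ ⊆ (S.erase x).image fun y => s(x, y)) (h₂ : T₂ ⊆ pairs (S.erase x)) :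
    (cluster S (T₁ ∪ T₂) {x}).card
      = (cluster (S.erase x) T₂ ((S.erase x).filter fun y => s(x, y) ∈ T₁)).card + 1 := by
  have hroot : ∀ y, s(x, y) ∉ T₂ := fun y hy =>
    Finset.notMem_erase x S (mk_mem_pairs.1 (h₂ hy)).1
  have hfar : ∀ u ∈ S.erase x, ∀ v ∈ S.erase x, s(u, v) ∉ T₁ := fun u hu v hv he => by
    obtain ⟨y, -, hy⟩ := Finset.mem_image.1 (h₁ he)
    rcases Sym2.eq_iff.1 hy with ⟨rfl, -⟩ | ⟨rfl, -⟩
    · exact Finset.notMem_erase _ S hu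
    · exact Finset.notMem_erase _ S hv
  have hN : ((S.erase x).filter fun y => s(x, y) ∈ T₁ ∪ T₂)
      = (S.erase x).filter fun y => s(x, y) ∈ T₁ :=
    Finset.filter_congr fun y _ => by simp [hroot y]
  rw [card_cluster_singleton hx, hN,
    cluster_congr (T' := T₂) fun u hu v hv _ => by simp [hfar u hu v hv]]

theorem cluster_singleton_eq_iff_inter {T : Finset (Sym2 V)} (ha : a ∈ S) (hK : K ⊆ S) :
    cluster S T {a} = K ↔ cluster S (T ∩ (pairs S \ pairs (S \ K))) {a} = K := by
  have hedge : ∀ u ∈ K, ∀ v ∈ S, u ≠ v → s(u, v) ∈ pairs S \ pairs (S \ K) :=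
    fun u hu v hv huv => Finset.mem_sdiff.2
      ⟨mk_mem_pairs.2 ⟨hK hu, hv, huv⟩, fun h => (Finset.mem_sdiff.1 (mk_mem_pairs.1 h).1).2 hu⟩
  constructor <;> intro h <;> refine cluster_singleton_eq_of_eq ha h fun u hu v hv huv => ?_ <;>
    simp [hedge u hu v hv huv]

variable {p : Sym2 V → ℝ} {z g μ : ℝ}

theorem expectation_pow_card_cluster_singleton_le (hp : ∀ e, 0 ≤ p e ∧ p e ≤ 1) (hz : 0 ≤ z)
    (hg : 1 ≤ g) (hkey : z * Real.exp (μ * (g - 1)) ≤ g) (hx : x ∈ S)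
    (hdeg : ∑ y ∈ S.erase x, p s(x, y) ≤ μ)
    (ih : ∀ A ⊆ S.erase x,
      expectation p (pairs (S.erase x)) (fun T => z ^ (cluster (S.erase x) T A).card)
        ≤ g ^ A.card) :
    expectation p (pairs S) (fun T => z ^ (cluster S T {x}).card) ≤ g := by
  set star := (S.erase x).image fun y => s(x, y)
  have hstar : ∑ e ∈ star, p e * (g - 1) ≤ μ * (g - 1) := by
    rw [← Finset.sum_mul, Finset.sum_image fun _ _ _ _ => Sym2.congr_right.1]
    exact mul_le_mul_of_nonneg_right hdeg (sub_nonneg.2 hg)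
  rw [pairs_eq_union_erase hx, expectation_union disjoint_image_pairs_erase]
  calc _ ≤ expectation p star (fun T₁ => z * g ^ T₁.card) := by
        refine expectation_mono hp fun T₁ h₁ => ?_
        rw [expectation_congr fun T₂ h₂ => by
            rw [card_cluster_singleton_union hx h₁ h₂, pow_succ'],
          expectation_const_mul, ← card_filter_mk_mem h₁]
        exact mul_le_mul_of_nonneg_left (ih _ (Finset.filter_subset _ _)) hz
    _ = z * ∏ e ∈ star, (1 + p e * (g - 1)) := by
        rw [expectation_const_mul, expectation_pow_card]
    _ ≤ z * Real.exp (μ * (g - 1)) := by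
        refine mul_le_mul_of_nonneg_left ?_ hz
        exact (Real.prod_one_add_le_exp_sum _ fun e => mul_nonneg (hp e).1 (sub_nonneg.2 hg)).trans
          (Real.exp_le_exp.2 hstar)
    _ ≤ g := hkey

/-- Given `cluster S T {a} = K`, the other sources explore `S \ K` through edges that are
independent of this event. -/
theorem expectation_ite_cluster_singleton_le (hp : ∀ e, 0 ≤ p e ∧ p e ≤ 1) (hz : 0 ≤ z)
    (hg : 1 ≤ g) (hA : A ⊆ S) (haA : a ∈ A) (hKS : K ⊆ S) (haK : a ∈ K)
    (ih : ∀ B ⊆ S \ K,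
      expectation p (pairs (S \ K)) (fun T => z ^ (cluster (S \ K) T B).card) ≤ g ^ B.card) :
    expectation p (pairs S) (fun T => if cluster S T {a} = K then z ^ (cluster S T A).card else 0)
      ≤ expectation p (pairs S)
          (fun T => if cluster S T {a} = K then z ^ (cluster S T {a}).card else 0)
        * g ^ (A.erase a).card := by
  set E₁ := pairs S \ pairs (S \ K)
  have hsplit : pairs S = E₁ ∪ pairs (S \ K) :=
    (Finset.sdiff_union_of_subset (pairs_mono Finset.sdiff_subset)).symm
  set f : Finset (Sym2 V) → ℝ := fun T => if cluster S T {a} = K then z ^ K.card else 0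
  have hf : ∀ T, f T = f (T ∩ E₁) := fun T =>
    if_congr (cluster_singleton_eq_iff_inter (hA haA) hKS) rfl rfl
  have hf0 : 0 ≤ expectation p E₁ f := expectation_nonneg hp fun T _ => by
    simp only [f]
    split_ifs <;> positivity
  calc _ = expectation p (pairs S) (fun T => f T * z ^ (cluster (S \ K) T (A \ K)).card) := by
        refine expectation_congr fun T _ => ?_
        simp only [f]
        split_ifs with h
        · rw [card_cluster_eq_add haA hA h, pow_add]
        · rw [zero_mul]
    _ = expectation p E₁ f
          * expectation p (pairs (S \ K)) (fun T => z ^ (cluster (S \ K) T (A \ K)).card) := by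
        rw [hsplit]
        exact expectation_mul_of_disjoint Finset.sdiff_disjoint hf fun T => by
          rw [cluster_inter_of_pairs_subset subset_rfl]
    _ ≤ expectation p E₁ f * g ^ (A.erase a).card := by
        refine mul_le_mul_of_nonneg_left ((ih _ (Finset.sdiff_subset_sdiff hA subset_rfl)).trans
          (pow_le_pow_right₀ hg (Finset.card_le_card fun b hb => ?_))) hf0
        obtain ⟨hbA, hbK⟩ := Finset.mem_sdiff.1 hb
        exact Finset.mem_erase.2 ⟨fun h => hbK (h ▸ haK), hbA⟩
    _ = _ := by
        rw [← expectation_of_subset Finset.sdiff_subset hf]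
        congr 1
        refine expectation_congr fun T _ => ?_
        simp only [f]
        split_ifs with h
        · rw [h]
        · rfl

theorem expectation_pow_card_cluster_le_of_singleton (hp : ∀ e, 0 ≤ p e ∧ p e ≤ 1) (hz : 0 ≤ z)
    (hg : 1 ≤ g) (hA : A ⊆ S) (haA : a ∈ A)
    (hsingle : expectation p (pairs S) (fun T => z ^ (cluster S T {a}).card) ≤ g)
    (ih : ∀ K ⊆ S, a ∈ K → ∀ B ⊆ S \ K,
      expectation p (pairs (S \ K)) (fun T => z ^ (cluster (S \ K) T B).card) ≤ g ^ B.card) :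
    expectation p (pairs S) (fun T => z ^ (cluster S T A).card) ≤ g ^ A.card := by
  have hφ : ∀ T ⊆ pairs S, cluster S T {a} ∈ S.powerset.filter (a ∈ ·) := fun T _ =>
    Finset.mem_filter.2 ⟨Finset.mem_powerset.2 cluster_subset,
      mem_cluster_self (hA haA) (Finset.mem_singleton_self a)⟩
  rw [expectation_eq_sum_ite _ _ hφ]
  calc _ ≤ ∑ K ∈ S.powerset.filter (a ∈ ·), expectation p (pairs S)
          (fun T => if cluster S T {a} = K then z ^ (cluster S T {a}).card else 0)
            * g ^ (A.erase a).card := by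
        refine Finset.sum_le_sum fun K hK => ?_
        obtain ⟨hKS, haK⟩ := Finset.mem_filter.1 hK
        exact expectation_ite_cluster_singleton_le hp hz hg hA haA (Finset.mem_powerset.1 hKS) haK
          (ih K (Finset.mem_powerset.1 hKS) haK)
    _ ≤ g * g ^ (A.erase a).card := by
        rw [← Finset.sum_mul, ← expectation_eq_sum_ite _ _ hφ]
        exact mul_le_mul_of_nonneg_right hsingle (by positivity)
    _ = g ^ A.card := by rw [← pow_succ', Finset.card_erase_add_one haA]

theorem sum_erase_le_of_subset (hp : ∀ e, 0 ≤ p e ∧ p e ≤ 1) (hS : S' ⊆ S)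
    (hdeg : ∀ x ∈ S, ∑ y ∈ S.erase x, p s(x, y) ≤ μ) :
    ∀ x ∈ S', ∑ y ∈ S'.erase x, p s(x, y) ≤ μ := fun x hx =>
  (Finset.sum_le_sum_of_subset_of_nonneg (Finset.erase_subset_erase x hS)
    fun _ _ _ => (hp _).1).trans (hdeg x (hS hx))

theorem expectation_pow_card_cluster_le (hp : ∀ e, 0 ≤ p e ∧ p e ≤ 1) (hz : 0 ≤ z) (hg : 1 ≤ g)
    (hkey : z * Real.exp (μ * (g - 1)) ≤ g) (S : Finset V)
    (hdeg : ∀ x ∈ S, ∑ y ∈ S.erase x, p s(x, y) ≤ μ) (A : Finset V) (hA : A ⊆ S) :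
    expectation p (pairs S) (fun T => z ^ (cluster S T A).card) ≤ g ^ A.card := by
  induction S using Finset.strongInduction generalizing A with
  | H S ih =>
    rcases A.eq_empty_or_nonempty with rfl | ⟨a, haA⟩
    · simp [cluster, expectation_const]
    refine expectation_pow_card_cluster_le_of_singleton hp hz hg hA haA ?_ fun K hKS haK =>
      ih _ (Finset.sdiff_ssubset hKS ⟨a, haK⟩) (sum_erase_le_of_subset hp Finset.sdiff_subset hdeg)
    have ha := hA haA
    exact expectation_pow_card_cluster_singleton_le hp hz hg hkey ha (hdeg a ha) <|
      ih _ (Finset.erase_ssubset ha) (sum_erase_le_of_subset hp (Finset.erase_subset a S) hdeg)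

theorem compSize_graphOf_eq_card_cluster {Λ : Set V} (hΛ : Λ.Finite) (e : Sym2 V → Bool)
    {x : V} (hx : x ∈ hΛ.toFinset) :
    compSize (graphOf Λ e) x
      = (cluster hΛ.toFinset ((pairs hΛ.toFinset).filter fun s => e s = true) {x}).card := by
  have hadj : (graphOf Λ e).Adj
      = Adj hΛ.toFinset ((pairs hΛ.toFinset).filter fun s => e s = true) := by
    ext u v
    simp only [graphOf, Adj, Set.Finite.mem_toFinset, Finset.mem_filter, mk_mem_pairs]
    tauto
  have hreach : {y | (graphOf Λ e).Reachable x y} = ↑(cluster hΛ.toFinset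
      ((pairs hΛ.toFinset).filter fun s => e s = true) {x}) := by
    ext y
    rw [Set.mem_ofPred_eq, Finset.mem_coe, mem_cluster_singleton,
      SimpleGraph.reachable_iff_reflTransGen, hadj]
    exact ⟨fun h => ⟨Reach.mem h hx, h⟩, fun h => h.2⟩
  rw [compSize, hreach, Set.ncard_coe_finset]

theorem sup_compSize_graphOf_le {Λ : Set V} (hΛ : Λ.Finite) (e : Sym2 V → Bool) {K : ℝ}
    (hK : 0 ≤ K) (h : ∀ x ∈ hΛ.toFinset,
      ((cluster hΛ.toFinset ((pairs hΛ.toFinset).filter fun s => e s = true) {x}).card : ℝ) ≤ K) :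
    ((hΛ.toFinset.sup fun x => compSize (graphOf Λ e) x : ℕ) : ℝ) ≤ K := by
  rcases hΛ.toFinset.eq_empty_or_nonempty with hS | hS
  · simpa [hS] using hK
  obtain ⟨x, hx, hsup⟩ := Finset.exists_mem_eq_sup _ hS fun x => compSize (graphOf Λ e) x
  rw [hsup, compSize_graphOf_eq_card_cluster hΛ e hx]
  exact h x hx

theorem le_measure_sup_compSize_le {Ω : Type*} [MeasurableSpace Ω] {P : Measure Ω}
    [IsProbabilityMeasure P] {Λ : Set V} (hΛ : Λ.Finite) {X : Sym2 V → Ω → Bool}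
    (hX : ∀ e, Measurable (X e)) (hindep : iIndepFun X P) {p : Sym2 V → ℝ}
    (hp : ∀ e, 0 ≤ p e ∧ p e ≤ 1)
    (hdist : ∀ x ∈ Λ, ∀ y ∈ Λ, x ≠ y → P {ω | X s(x, y) ω = true} = ENNReal.ofReal (p s(x, y)))
    {θ g μ : ℝ} (hθ : 0 ≤ θ) (hg : 1 ≤ g) (hkey : Real.exp θ * Real.exp (μ * (g - 1)) ≤ g)
    (hdeg : ∀ x ∈ hΛ.toFinset, ∑ y ∈ hΛ.toFinset.erase x, p s(x, y) ≤ μ) {K : ℝ} (hK : 0 ≤ K) :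
    1 - ENNReal.ofReal (hΛ.toFinset.card * (Real.exp (-(θ * K)) * g))
      ≤ P {ω | ((hΛ.toFinset.sup fun x => compSize (graphOf Λ fun s => X s ω) x : ℕ) : ℝ) ≤ K} := by
  set S := hΛ.toFinset
  set bad : V → Set Ω :=
    fun x => {ω | K < ((cluster S ((pairs S).filter fun e => X e ω = true) {x}).card : ℝ)}
  have hdist' : ∀ e ∈ pairs S, P {ω | X e ω = true} = ENNReal.ofReal (p e) := by
    intro e he
    induction e using Sym2.ind with
    | _ x y =>
      obtain ⟨hx, hy, hxy⟩ := mk_mem_pairs.1 he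
      exact hdist x (hΛ.mem_toFinset.1 hx) y (hΛ.mem_toFinset.1 hy) hxy
  have hbad : ∀ x ∈ S, P (bad x) ≤ ENNReal.ofReal (Real.exp (-(θ * K)) * g) := by
    intro x hx
    rw [measure_setOf_filter hX hindep hp hdist' fun T => K < ((cluster S T {x}).card : ℝ)]
    refine ENNReal.ofReal_le_ofReal ((expectation_ite_lt_le hp hθ _ K).trans ?_)
    have := expectation_pow_card_cluster_le hp (Real.exp_pos θ).le hg hkey S hdeg {x}
      (Finset.singleton_subset_iff.2 hx)
    rw [Finset.card_singleton, pow_one] at this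
    exact mul_le_mul_of_nonneg_left this (Real.exp_pos _).le
  have hcover : {ω | ((S.sup fun x => compSize (graphOf Λ fun s => X s ω) x : ℕ) : ℝ) ≤ K}ᶜ
      ⊆ ⋃ x ∈ S, bad x := fun ω hω => by
    by_contra h
    simp only [Set.mem_iUnion, not_exists, bad, Set.mem_ofPred_eq, not_lt] at h
    exact hω (sup_compSize_graphOf_le hΛ _ hK h)
  rw [tsub_le_iff_right, ← measure_univ (μ := P)]
  refine (measure_univ_le_add_compl _).trans (add_le_add_right ?_ _)
  calc _ ≤ ∑ x ∈ S, P (bad x) := (measure_mono hcover).trans (measure_biUnion_finset_le S _)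
    _ ≤ ∑ x ∈ S, ENNReal.ofReal (Real.exp (-(θ * K)) * g) := Finset.sum_le_sum hbad
    _ = _ := by
        rw [Finset.sum_const, nsmul_eq_mul, ENNReal.ofReal_mul (Nat.cast_nonneg _),
          ENNReal.ofReal_natCast]

end Percolation

section HierarchicalLattice

variable {d L : ℕ}

theorem hnorm_neg (x : HLat d L) : hnorm (-x) = hnorm x := by
  simp [hnorm, Finsupp.support_neg]

theorem hnorm_le_pow_iff (hL : 1 < L) {x : HLat d L} {m : ℕ} :
    hnorm x ≤ L ^ m ↔ ∀ i ∈ x.support, i < m := by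
  simp only [hnorm, Finset.sup_le_iff, Nat.pow_le_pow_iff_right hL, Nat.add_one_le_iff]

theorem hnorm_eq_of_not_le (hL : 1 < L) {x : HLat d L} {n : ℕ} (h : hnorm x ≤ L ^ (n + 1))
    (h' : ¬ hnorm x ≤ L ^ n) : hnorm x = L ^ (n + 1) := by
  rw [hnorm_le_pow_iff hL] at h h'
  push Not at h'
  obtain ⟨i, hi, hni⟩ := h'
  obtain rfl : i = n := by have := h i hi; omega
  exact le_antisymm ((hnorm_le_pow_iff hL).2 h) (Finset.le_sup (f := fun i => L ^ (i + 1)) hi)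

theorem sub_mem_Lambda (hL : 1 < L) {n : ℕ} {x y : HLat d L} (hx : x ∈ Lambda d L n)
    (hy : y ∈ Lambda d L n) : x - y ∈ Lambda d L n := by
  simp only [Lambda, Set.mem_ofPred_eq, hnorm_le_pow_iff hL] at hx hy ⊢
  intro i hi
  rcases Finset.mem_union.1 (Finsupp.support_sub hi) with h | h
  exacts [hx i h, hy i h]

theorem toFinset_Lambda_eq_finsupp [NeZero L] (hL : 1 < L) {n : ℕ} (h : (Lambda d L n).Finite) :
    h.toFinset = (Finset.range n).finsupp fun _ => Finset.univ := by
  ext x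
  simp [Finset.mem_finsupp_iff, Lambda, hnorm_le_pow_iff hL, Finset.subset_iff]

theorem card_toFinset_Lambda (hL : 1 < L) {n : ℕ} (h : (Lambda d L n).Finite) :
    h.toFinset.card = L ^ (n * d) := by
  have : NeZero L := ⟨by omega⟩
  rw [toFinset_Lambda_eq_finsupp hL, Finset.card_finsupp]
  simp [pow_mul']

theorem sum_toFinset_Lambda_hnorm (hL : 1 < L) (hfin : ∀ m, (Lambda d L m).Finite) (n : ℕ)
    (f : ℕ → ℝ) :
    ∑ y ∈ (hfin n).toFinset, f (hnorm y)
      = f 0 + ∑ i ∈ Finset.range n, (L : ℝ) ^ (i * d) * ((L : ℝ) ^ d - 1) * f (L ^ (i + 1)) := by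
  induction n with
  | zero =>
    have h0 : (hfin 0).toFinset = {0} := by
      ext x
      rw [Set.Finite.mem_toFinset, Finset.mem_singleton, Lambda, Set.mem_ofPred_eq,
        hnorm_le_pow_iff hL, ← Finsupp.support_eq_empty, Finset.eq_empty_iff_forall_notMem]
      simp
    simp [h0, hnorm]
  | succ n ih =>
    have hsub : (hfin n).toFinset ⊆ (hfin (n + 1)).toFinset := fun y hy => by
      simp only [Set.Finite.mem_toFinset, Lambda, Set.mem_ofPred_eq] at hy ⊢
      exact hy.trans (Nat.pow_le_pow_right (by omega) n.le_succ)
    have hshell : ∀ y ∈ (hfin (n + 1)).toFinset \ (hfin n).toFinset, hnorm y = L ^ (n + 1) :=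
      fun y hy => by
        simp only [Finset.mem_sdiff, Set.Finite.mem_toFinset, Lambda, Set.mem_ofPred_eq] at hy
        exact hnorm_eq_of_not_le hL hy.1 hy.2
    have hcard := Finset.card_sdiff_add_card_eq_card hsub
    rw [card_toFinset_Lambda hL, card_toFinset_Lambda hL] at hcard
    have hcard' : (((hfin (n + 1)).toFinset \ (hfin n).toFinset).card : ℝ)
        = (L : ℝ) ^ (n * d) * ((L : ℝ) ^ d - 1) := by
      have := congrArg (Nat.cast (R := ℝ)) hcard
      push_cast at this
      rw [add_mul, one_mul, pow_add] at this
      linarith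
    rw [← Finset.sum_sdiff hsub, Finset.sum_congr rfl fun y hy => congrArg f (hshell y hy),
      Finset.sum_const, nsmul_eq_mul, hcard', ih, Finset.sum_range_succ]
    ring

theorem sum_erase_hnorm_sub (hL : 1 < L) (hfin : ∀ m, (Lambda d L m).Finite) {n : ℕ}
    {x : HLat d L} (hx : x ∈ Lambda d L n) (f : ℕ → ℝ) :
    ∑ y ∈ (hfin n).toFinset.erase x, f (hnorm (x - y))
      = ∑ i ∈ Finset.range n, (L : ℝ) ^ (i * d) * ((L : ℝ) ^ d - 1) * f (L ^ (i + 1)) := by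
  have hshift : ∑ y ∈ (hfin n).toFinset.erase x, f (hnorm (x - y))
      = ∑ y ∈ (hfin n).toFinset.erase 0, f (hnorm y) := by
    have hmem : ∀ {u v : HLat d L}, u ∈ (hfin n).toFinset.erase v →
        x - u ∈ (hfin n).toFinset.erase (x - v) := fun hu => by
      rw [Finset.mem_erase, Set.Finite.mem_toFinset] at hu ⊢
      exact ⟨fun h => hu.1 (sub_right_injective h), sub_mem_Lambda hL hx hu.2⟩
    refine Finset.sum_bij' (fun y _ => x - y) (fun y _ => x - y) (fun y hy => ?_) (fun y hy => ?_)
      (fun y _ => sub_sub_cancel x y) (fun y _ => sub_sub_cancel x y) fun _ _ => rfl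
    · simpa using hmem hy
    · simpa using hmem hy
  rw [hshift, ← add_right_inj (f (hnorm (0 : HLat d L))), Finset.add_sum_erase _
    (fun y => f (hnorm y)) ((hfin n).mem_toFinset.2 (by simp [Lambda, hnorm])),
    sum_toFinset_Lambda_hnorm hL hfin]
  simp [hnorm]

end HierarchicalLattice

theorem one_sub_exp_neg_mul_le {t : ℝ} (ht : 0 ≤ t) (a : ℝ) :
    1 - Real.exp (-(t * a)) ≤ t * ((1 + a) * (1 - Real.exp (-a))) := by
  have h1 : 1 - Real.exp (-(t * a)) ≤ t * a := by linarith [Real.add_one_le_exp (-(t * a))]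
  have h2 : (1 + a) * Real.exp (-a) ≤ 1 := by
    have := mul_le_mul_of_nonneg_right (Real.add_one_le_exp a) (Real.exp_pos (-a)).le
    rwa [← Real.exp_add, add_neg_cancel, Real.exp_zero, add_comm] at this
  nlinarith

theorem le_two_mul_of_one_sub_exp_neg_le {a b : ℝ} (hb0 : 0 ≤ b) (hb : b ≤ 1 / 2)
    (h : 1 - Real.exp (-a) ≤ b) : a ≤ 2 * b := by
  have hpos : 0 < 1 - b := by linarith
  have hlog : Real.log (1 - b) ≤ -a := by
    rw [Real.log_le_iff_le_exp hpos]
    linarith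
  have := Real.one_sub_inv_le_log_of_pos hpos
  have : 1 - (1 - b)⁻¹ = -(b / (1 - b)) := by field_simp; ring
  have : b / (1 - b) ≤ 2 * b := by rw [div_le_iff₀ hpos]; nlinarith
  linarith

theorem exp_sub_sq_le_one_add {t : ℝ} (ht : 0 ≤ t) : Real.exp (t - t ^ 2) ≤ 1 + t := by
  have hpos : 0 < 1 + t := by linarith
  have hlog := Real.one_sub_inv_le_log_of_pos hpos
  have : t - t ^ 2 ≤ 1 - (1 + t)⁻¹ := by
    rw [show 1 - (1 + t)⁻¹ = t / (1 + t) by field_simp; ring, le_div_iff₀ hpos]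
    nlinarith [pow_two_nonneg t, mul_nonneg ht (pow_two_nonneg t)]
  calc Real.exp (t - t ^ 2) ≤ Real.exp (Real.log (1 + t)) := Real.exp_le_exp.2 (by linarith)
    _ = 1 + t := Real.exp_log hpos

theorem sum_mul_one_sub_exp_neg_mul_le {ι : Type*} {s : Finset ι} {w a : ι → ℝ} {δ t : ℝ}
    (hw : ∀ i ∈ s, 0 ≤ w i) (ha : ∀ i ∈ s, 0 ≤ a i) (haδ : ∀ i ∈ s, a i ≤ δ) (ht : 0 ≤ t)
    (hsum : ∑ i ∈ s, w i * (1 - Real.exp (-a i)) = 1) :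
    ∑ i ∈ s, w i * (1 - Real.exp (-(t * a i))) ≤ t * (1 + δ) := by
  calc ∑ i ∈ s, w i * (1 - Real.exp (-(t * a i)))
      ≤ ∑ i ∈ s, t * (1 + δ) * (w i * (1 - Real.exp (-a i))) := by
        refine Finset.sum_le_sum fun i hi => ?_
        have hexp : 0 ≤ 1 - Real.exp (-a i) := by
          linarith [Real.exp_le_one_iff.2 (neg_nonpos.2 (ha i hi))]
        calc w i * (1 - Real.exp (-(t * a i)))
            ≤ w i * (t * ((1 + a i) * (1 - Real.exp (-a i)))) :=
              mul_le_mul_of_nonneg_left (one_sub_exp_neg_mul_le ht (a i)) (hw i hi)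
          _ ≤ w i * (t * ((1 + δ) * (1 - Real.exp (-a i)))) := by
              gcongr
              · exact hw i hi
              · exact haδ i hi
          _ = _ := by ring
    _ = t * (1 + δ) := by rw [← Finset.mul_sum, hsum, mul_one]

section Zeta

variable {d L n : ℕ} {ρ : ℝ → ℝ} {z : ℝ}

theorem zetaEq.sum_eq_one (h : zetaEq d L ρ n z) :
    ∑ i ∈ Finset.range n, (L : ℝ) ^ (i * d) * ((L : ℝ) ^ d - 1)
      * (1 - Real.exp (-(z⁻¹ * ρ ((L : ℝ) ^ (i + 1))))) = 1 := by
  have hshift : ∀ f : ℕ → ℝ, ∑ i ∈ Finset.Icc 1 n, f i = ∑ i ∈ Finset.range n, f (i + 1) :=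
    fun f => by rw [Finset.range_eq_Ico, Finset.sum_Ico_add' (c := 1)]; rfl
  rw [zetaEq, hshift] at h
  simp only [Nat.add_sub_cancel, neg_mul] at h
  have hgeom : ∑ i ∈ Finset.range n, (L : ℝ) ^ (i * d) * ((L : ℝ) ^ d - 1)
      = (L : ℝ) ^ (n * d) - 1 := by
    simp_rw [mul_comm _ d, pow_mul, ← Finset.sum_mul, geom_sum_mul]
  calc _ = ∑ i ∈ Finset.range n, (L : ℝ) ^ (i * d) * ((L : ℝ) ^ d - 1)
        - ((L : ℝ) ^ d - 1) * ∑ i ∈ Finset.range n,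
          (L : ℝ) ^ (i * d) * Real.exp (-(z⁻¹ * ρ ((L : ℝ) ^ (i + 1)))) := by
        rw [Finset.mul_sum, ← Finset.sum_sub_distrib]
        exact Finset.sum_congr rfl fun i _ => by ring
    _ = 1 := by rw [hgeom, h]; ring

theorem zetaEq.inv_mul_rho_pow_le (h : zetaEq d L ρ n z) (hz : 0 < z) (hd : 1 ≤ d) (hL : 2 ≤ L)
    (hn : 2 ≤ n) (hρnn : ∀ r : ℝ, 0 ≤ r → 0 ≤ ρ r) :
    z⁻¹ * ρ ((L : ℝ) ^ n) ≤ 2 / ((L : ℝ) ^ (n - 1)) ^ d := by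
  have ha : ∀ i : ℕ, 0 ≤ 1 - Real.exp (-(z⁻¹ * ρ ((L : ℝ) ^ (i + 1)))) := fun i => by
    rw [sub_nonneg, Real.exp_le_one_iff, neg_nonpos]
    exact mul_nonneg (inv_nonneg.2 hz.le) (hρnn _ (by positivity))
  have hL2 : (2 : ℝ) ≤ L := by exact_mod_cast hL
  have hLd : (2 : ℝ) ≤ (L : ℝ) ^ d := hL2.trans (le_self_pow₀ (by linarith) (by omega))
  have hR : (2 : ℝ) ≤ ((L : ℝ) ^ (n - 1)) ^ d :=
    (hL2.trans (le_self_pow₀ (by linarith) (by omega))).trans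
      (le_self_pow₀ (one_le_pow₀ (by linarith)) (by omega))
  have hlast := Finset.single_le_sum (fun i _ => mul_nonneg (mul_nonneg (by positivity)
    (by linarith)) (ha i)) (Finset.mem_range.2 (Nat.sub_lt (by omega) one_pos)) |>.trans_eq
    h.sum_eq_one
  have he := ha (n - 1)
  rw [Nat.sub_add_cancel (by omega)] at he hlast
  rw [pow_mul] at hlast
  have hb : 1 - Real.exp (-(z⁻¹ * ρ ((L : ℝ) ^ n))) ≤ 1 / ((L : ℝ) ^ (n - 1)) ^ d := by
    rw [le_div_iff₀ (by positivity)]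
    nlinarith [mul_nonneg he (by positivity : (0 : ℝ) ≤ ((L : ℝ) ^ (n - 1)) ^ d)]
  have := le_two_mul_of_one_sub_exp_neg_le (by positivity)
    ((one_div_le_one_div_of_le two_pos hR).trans_eq (by norm_num)) hb
  rwa [mul_one_div] at this

theorem zetaEq.inv_mul_rho_le (h : zetaEq d L ρ n z) (hz : 0 < z) (hd : 1 ≤ d) (hL : 2 ≤ L)
    (hn : 2 ≤ n) (hρnn : ∀ r : ℝ, 0 ≤ r → 0 ≤ ρ r) {A1 A2 α : ℝ} (hA1 : 0 < A1)
    (hA12 : A1 ≤ A2) (hα0 : 0 < α) (hρlb : ∀ r : ℝ, 1 ≤ r → A1 * r ^ (-α) ≤ ρ r)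
    (hρub : ∀ r : ℝ, 1 ≤ r → ρ r ≤ A2 * r ^ (-α)) (i : ℕ) :
    z⁻¹ * ρ ((L : ℝ) ^ (i + 1)) ≤ 2 * A2 / A1 * ((L : ℝ) ^ (n - 1)) ^ (α - d) := by
  set R := (L : ℝ) ^ (n - 1)
  have hL1 : (1 : ℝ) ≤ L := by exact_mod_cast hL.trans' one_le_two
  have hR0 : 0 < R := by positivity
  have hz0 : 0 ≤ z⁻¹ := inv_nonneg.2 hz.le
  have hLn : (L : ℝ) ^ n = L * R := by rw [← pow_succ', Nat.sub_add_cancel (by omega)]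
  have hlow : z⁻¹ * (A1 * ((L : ℝ) ^ (-α) * R ^ (-α))) ≤ 2 / R ^ d := by
    rw [← Real.mul_rpow (by positivity) hR0.le, ← hLn]
    exact (mul_le_mul_of_nonneg_left (hρlb _ (one_le_pow₀ hL1)) hz0).trans
      (h.inv_mul_rho_pow_le hz hd hL hn hρnn)
  have hup : z⁻¹ * ρ ((L : ℝ) ^ (i + 1)) ≤ z⁻¹ * (A2 * (L : ℝ) ^ (-α)) := by
    refine mul_le_mul_of_nonneg_left ((hρub _ (one_le_pow₀ hL1)).trans ?_) hz0
    refine mul_le_mul_of_nonneg_left ?_ (hA1.le.trans hA12)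
    rw [← Real.rpow_natCast]
    exact Real.rpow_le_rpow_of_nonpos (by positivity) (Real.self_le_rpow_of_one_le hL1 (by
      exact_mod_cast Nat.le_add_left 1 i)) (neg_nonpos.2 hα0.le)
  calc z⁻¹ * ρ ((L : ℝ) ^ (i + 1))
      ≤ A2 / A1 * (z⁻¹ * (A1 * ((L : ℝ) ^ (-α) * R ^ (-α)))) * R ^ α := by
        rw [Real.rpow_neg hR0.le]
        convert hup using 1
        field_simp
    _ ≤ A2 / A1 * (2 / R ^ d) * R ^ α := by
        have : 0 ≤ A2 / A1 := div_nonneg (hA1.le.trans hA12) hA1.le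
        gcongr
    _ = 2 * A2 / A1 * R ^ (α - d) := by
        rw [Real.rpow_sub hR0, Real.rpow_natCast]
        ring

end Zeta

section EdgeProbability

variable {d L n : ℕ}

/-- In the graph `G^{HL}_{Λ_n}(r_t)` the edge probabilities are `edgeProb ρ c` with
`c = -(1 + t) ζ_n⁻¹`. -/
def edgeProb (ρ : ℝ → ℝ) (c : ℝ) : Sym2 (HLat d L) → ℝ :=
  Sym2.lift ⟨fun x y => 1 - Real.exp (c * ρ (hnorm (x - y) : ℝ)), fun x y => by
    simp only [← neg_sub x y, hnorm_neg]⟩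

variable {ρ : ℝ → ℝ}

theorem edgeProb_mk (c : ℝ) (x y : HLat d L) :
    edgeProb ρ c s(x, y) = 1 - Real.exp (c * ρ (hnorm (x - y) : ℝ)) := rfl

theorem edgeProb_mem_Icc (hρnn : ∀ r : ℝ, 0 ≤ r → 0 ≤ ρ r) {c : ℝ} (hc : c ≤ 0)
    (e : Sym2 (HLat d L)) : 0 ≤ edgeProb ρ c e ∧ edgeProb ρ c e ≤ 1 := by
  induction e using Sym2.ind with
  | _ x y =>
    rw [edgeProb_mk]
    have : Real.exp (c * ρ (hnorm (x - y) : ℝ)) ≤ 1 :=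
      Real.exp_le_one_iff.2 (mul_nonpos_of_nonpos_of_nonneg hc (hρnn _ (Nat.cast_nonneg _)))
    constructor <;> linarith [Real.exp_pos (c * ρ (hnorm (x - y) : ℝ))]

theorem sum_erase_edgeProb_le (hd : 1 ≤ d) (hL : 2 ≤ L) (hn : 2 ≤ n)
    (hfin : ∀ m, (Lambda d L m).Finite) {x : HLat d L} (hx : x ∈ Lambda d L n)
    (hρnn : ∀ r : ℝ, 0 ≤ r → 0 ≤ ρ r) {A1 A2 α : ℝ} (hA1 : 0 < A1) (hA12 : A1 ≤ A2)
    (hα0 : 0 < α) (hρlb : ∀ r : ℝ, 1 ≤ r → A1 * r ^ (-α) ≤ ρ r)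
    (hρub : ∀ r : ℝ, 1 ≤ r → ρ r ≤ A2 * r ^ (-α)) {z : ℝ} (hz : 0 < z) (hζ : zetaEq d L ρ n z)
    {t : ℝ} (ht : 0 ≤ t) :
    ∑ y ∈ (hfin n).toFinset.erase x, edgeProb ρ (-t * z⁻¹) s(x, y)
      ≤ t * (1 + 2 * A2 / A1 * ((L : ℝ) ^ (n - 1)) ^ (α - d)) := by
  simp only [edgeProb_mk]
  rw [sum_erase_hnorm_sub (by omega) hfin hx fun k => 1 - Real.exp (-t * z⁻¹ * ρ k)]
  simp only [Nat.cast_pow, show ∀ r, -t * z⁻¹ * r = -(t * (z⁻¹ * r)) from fun r => by ring]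
  refine sum_mul_one_sub_exp_neg_mul_le (fun i _ => ?_) (fun i _ => ?_)
    (fun i _ => hζ.inv_mul_rho_le hz hd hL hn hρnn hA1 hA12 hα0 hρlb hρub i) ht hζ.sum_eq_one
  · have : (1 : ℝ) ≤ (L : ℝ) ^ d := one_le_pow₀ (by exact_mod_cast hL.trans' one_le_two)
    exact mul_nonneg (by positivity) (by linarith)
  · exact mul_nonneg (inv_nonneg.2 hz.le) (hρnn _ (by positivity))

end EdgeProbability

theorem exp_mul_exp_le_one_add {ε : ℝ} (hε : 0 ≤ ε) :
    Real.exp (ε ^ 2 / 16) * Real.exp ((1 - ε / 2) * (1 + ε / 4 - 1)) ≤ 1 + ε / 4 := by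
  rw [← Real.exp_add]
  convert exp_sub_sq_le_one_add (t := ε / 4) (by positivity) using 2
  ring

theorem pow_mul_exp_neg_eq {L : ℝ} (hL : 0 < L) (d n : ℕ) {ε : ℝ} (hε : ε ≠ 0) :
    L ^ (n * d) * Real.exp (-(ε ^ 2 / 16 * (16 * (d * Real.log L + 1) * n / ε ^ 2)))
      = Real.exp (-n) := by
  rw [← Real.rpow_natCast, Real.rpow_def_of_pos hL, ← Real.exp_add]
  congr 1
  push_cast
  field_simp
  ring

theorem tendsto_mul_rpow_pow_sub_one {L : ℝ} (hL : 1 < L) {β : ℝ} (hβ : β < 0) (c : ℝ) :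
    Tendsto (fun n : ℕ => c * (L ^ (n - 1)) ^ β) atTop (nhds 0) := by
  have h := (tendsto_rpow_neg_atTop (neg_pos.2 hβ)).comp
    ((tendsto_pow_atTop_atTop_of_one_lt hL).comp (tendsto_sub_atTop_nat 1))
  simpa [Function.comp_def] using h.const_mul c

theorem tendsto_one_sub_ofReal_exp_neg_mul (g : ℝ) :
    Tendsto (fun n : ℕ => 1 - ENNReal.ofReal (Real.exp (-n) * g)) atTop (nhds 1) := by
  have h := ((Real.tendsto_exp_neg_atTop_nhds_zero.comp tendsto_natCast_atTop_atTop).mul_const g)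
  have h' := ENNReal.tendsto_ofReal h
  simpa using ENNReal.Tendsto.sub tendsto_const_nhds h' (.inl ENNReal.one_ne_top)

theorem purely_subcritical_largest_component_general
    (d L : ℕ) (hd : 1 ≤ d) (hL : 2 ≤ L)
    (A1 A2 α : ℝ) (hA1 : 0 < A1) (hA12 : A1 ≤ A2)
    (hα0 : 0 < α) (hαd : α < (d : ℝ))
    (ρ : ℝ → ℝ)
    (hρnn : ∀ r : ℝ, 0 ≤ r → 0 ≤ ρ r)
    (hρlb : ∀ r : ℝ, 1 ≤ r → A1 * r ^ (-α) ≤ ρ r)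
    (hρub : ∀ r : ℝ, 1 ≤ r → ρ r ≤ A2 * r ^ (-α))
    (ζ : ℕ → ℝ) (hζpos : ∀ n : ℕ, 1 ≤ n → 0 < ζ n)
    (hζeq : ∀ n : ℕ, 1 ≤ n → zetaEq d L ρ n (ζ n))
    (hfin : ∀ n : ℕ, (Lambda d L n).Finite)
    {Ω : Type} [MeasurableSpace Ω] (P : Measure Ω) [IsProbabilityMeasure P]
    (F : ℕ → ℝ → Sym2 (HLat d L) → Ω → Bool)
    (hFmeas : ∀ n t s, Measurable (F n t s))
    (hFindep : ∀ (n : ℕ) (t : ℝ), iIndepFun (F n t) P)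
    (hFdist : ∀ n : ℕ, 1 ≤ n → ∀ t : ℝ, -1 < t → ∀ x y : HLat d L, x ≠ y →
      P {ω | F n t s(x, y) ω = true} =
        ENNReal.ofReal (1 - Real.exp (-(1 + t) * (ζ n)⁻¹ * ρ ((hnorm (x - y) : ℝ)))))
 :
    ∃ C : ℝ, 0 < C ∧ ∀ ε : ℝ, 0 < ε → ε < 1 →
      Tendsto (fun n : ℕ =>
          P {ω | ((((hfin n).toFinset.sup fun x =>
              compSize (graphOf (Lambda d L n) (fun s => F n (-ε) s ω)) x) : ℕ) : ℝ) ≤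
            C * (n : ℝ) / ε ^ 2})
        atTop (nhds 1) := by
  have hL1 : (1 : ℝ) < L := by exact_mod_cast hL
  refine ⟨16 * (d * Real.log L + 1), by positivity, fun ε hε0 hε1 => ?_⟩
  have hδ := tendsto_mul_rpow_pow_sub_one hL1 (sub_neg.2 hαd) (2 * A2 / A1)
  refine tendsto_of_tendsto_of_tendsto_of_le_of_le' (tendsto_one_sub_ofReal_exp_neg_mul (1 + ε / 4))
    tendsto_const_nhds ?_ (.of_forall fun _ => prob_le_one)
  filter_upwards [eventually_ge_atTop 2, hδ.eventually (ge_mem_nhds (half_pos hε0))] with n hn hδn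
  have hdeg : ∀ x ∈ (hfin n).toFinset,
      ∑ y ∈ (hfin n).toFinset.erase x, edgeProb ρ (-(1 + -ε) * (ζ n)⁻¹) s(x, y) ≤ 1 - ε / 2 :=
    fun x hx => (sum_erase_edgeProb_le hd hL hn hfin ((hfin n).mem_toFinset.1 hx) hρnn hA1 hA12
      hα0 hρlb hρub (hζpos n (by omega)) (hζeq n (by omega)) (by linarith)).trans (by nlinarith)
  have hbound := Percolation.le_measure_sup_compSize_le (hfin n) (hFmeas n (-ε)) (hFindep n (-ε))
    (edgeProb_mem_Icc hρnn (by nlinarith [inv_pos.2 (hζpos n (by omega))]))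
    (fun x _ y _ hxy => hFdist n (by omega) (-ε) (by linarith) x y hxy) (by positivity)
    (by linarith) (exp_mul_exp_le_one_add hε0.le) hdeg (K := 16 * (d * Real.log L + 1) * n / ε ^ 2)
    (by positivity)
  rwa [card_toFinset_Lambda (by omega), Nat.cast_pow, ← mul_assoc,
    pow_mul_exp_neg_eq (by positivity) d n hε0.ne'] at hbound

/-- Purely subcritical regime: the largest component of
`G^{HL}_{Λ_n}(r^{(n)}_{-ε})` has at most `C n ε⁻²` vertices with probability tending to one. -/
theorem purely_subcritical_largest_component
    (d L : ℕ) (hd : 1 ≤ d) (hL : 2 ≤ L)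
    (A1 A2 α : ℝ) (hA1 : 0 < A1) (hA12 : A1 ≤ A2)
    (hα0 : 0 < α) (hαd : α < (d : ℝ))
    (ρ : ℝ → ℝ) (hρ0 : ρ 0 = 0)
    (hρnn : ∀ r : ℝ, 0 ≤ r → 0 ≤ ρ r)
    (hρlb : ∀ r : ℝ, 1 ≤ r → A1 * r ^ (-α) ≤ ρ r)
    (hρub : ∀ r : ℝ, 1 ≤ r → ρ r ≤ A2 * r ^ (-α))
    (ζ : ℕ → ℝ) (hζpos : ∀ n : ℕ, 1 ≤ n → 0 < ζ n)
    (hζeq : ∀ n : ℕ, 1 ≤ n → zetaEq d L ρ n (ζ n))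
    (hfin : ∀ n : ℕ, (Lambda d L n).Finite)
    {Ω : Type} [MeasurableSpace Ω] (P : Measure Ω) [IsProbabilityMeasure P]
    (F : ℕ → ℝ → Sym2 (HLat d L) → Ω → Bool)
    (hFmeas : ∀ n t s, Measurable (F n t s))
    (hFindep : ∀ (n : ℕ) (t : ℝ), iIndepFun (F n t) P)
    (hFdist : ∀ n : ℕ, 1 ≤ n → ∀ t : ℝ, -1 < t → ∀ x y : HLat d L, x ≠ y →
      P {ω | F n t s(x, y) ω = true} =
        ENNReal.ofReal (1 - Real.exp (-(1 + t) * (ζ n)⁻¹ * ρ ((hnorm (x - y) : ℝ)))))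
 :
    ∃ C : ℝ, 0 < C ∧ ∀ ε : ℝ, 0 < ε → ε < 1 →
      Tendsto (fun n : ℕ =>
          P {ω | ((((hfin n).toFinset.sup fun x =>
              compSize (graphOf (Lambda d L n) (fun s => F n (-ε) s ω)) x) : ℕ) : ℝ) ≤
            C * (n : ℝ) / ε ^ 2})
        atTop (nhds 1) :=
  purely_subcritical_largest_component_general d L hd hL A1 A2 α hA1 hA12 hα0 hαd ρ hρnn hρlb hρub ζ
    hζpos hζeq hfin P F hFmeas hFindep hFdist
end
end

section
/- Define ζ̃_n = (L^d − 1)·∑_{i=1}^n L^{(i−1)d}·ρ(L^i). Then 0 ≤ ζ_n^{−1} − ζ̃_n^{−1} for all n ≥ 1, and there exist a constant C > 0 and a threshold n₀ ≥ 1, both depending only on A_1, A_2, L, d and α, such that for all n ≥ n₀: ζ_n^{−1} − ζ̃_n^{−1} ≤ C·L^{−n(2d−α)} if 0 < α < d/2; ζ_n^{−1} − ζ̃_n^{−1} ≤ C·n·L^{−3n(d−α)} if α = d/2; and ζ_n^{−1} − ζ̃_n^{−1} ≤ C·L^{−3n(d−α)} if d/2 < α < d. -/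
open MeasureTheory ProbabilityTheory Filter Finset
open scoped ENNReal Classical

noncomputable section

/-!
Write `w_i = L^{id} - L^{(i-1)d}` and `t_i = ζ_n⁻¹ ρ(L^i)`. Since `∑_{i ≤ n} w_i = L^{nd} - 1`, the
equation for `ζ_n` says `∑ w_i (1 - e^{-t_i}) = 1`. The bound `1 - e^{-t} ≤ t` gives `ζ_n ≤ ζ̃_n`;
the bound `1 - e^{-t} ≥ t - t²/2` gives `ζ_n⁻¹ - ζ̃_n⁻¹ ≤ Q_n / (2 ζ_n² ζ̃_n)` with
`Q_n = ∑ w_i ρ(L^i)²`; and `1 - e^{-t} ≥ t / (1 + t)`, applied to the single term `i = n`, gives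
`ζ_n ≥ (w_n - 1) ρ(L^n) ≳ L^{n(d-α)}`. Finally `Q_n ≲ ∑_{i ≤ n} L^{i(d-2α)}`, a geometric sum
that is dominated by its last term, equal to `n`, or bounded according as `α < d/2`, `α = d/2`,
`α > d/2`.
-/

namespace Real

lemma exp_neg_le_one_sub_add_sq_div_two {t : ℝ} (ht : 0 ≤ t) :
    exp (-t) ≤ 1 - t + t ^ 2 / 2 := by
  have hexp : 1 + t + t ^ 2 / 2 ≤ exp t := quadratic_le_exp_of_nonneg ht
  have hprod : exp (-t) * (1 + t + t ^ 2 / 2) ≤ 1 := by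
    rw [exp_neg, inv_mul_le_iff₀ (exp_pos t), mul_one]
    exact hexp
  nlinarith [exp_pos (-t), sq_nonneg (t ^ 2)]

lemma div_one_add_le_one_sub_exp_neg {t : ℝ} (ht : 0 ≤ t) : t / (1 + t) ≤ 1 - exp (-t) := by
  have hexp : exp (-t) ≤ 1 / (1 + t) := by
    rw [exp_neg, ← one_div]
    exact one_div_le_one_div_of_le (by positivity) (by linarith [add_one_le_exp t])
  calc t / (1 + t) = 1 - 1 / (1 + t) := by field_simp; ring
    _ ≤ 1 - exp (-t) := by linarith

end Real

section ExpEquation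

variable {ι : Type*} {s : Finset ι} {w p : ι → ℝ} {z : ℝ}

lemma le_sum_mul_of_sum_mul_one_sub_exp_eq_one (hw : ∀ i ∈ s, 0 ≤ w i) (hz : 0 < z)
    (h : ∑ i ∈ s, w i * (1 - Real.exp (-z⁻¹ * p i)) = 1) : z ≤ ∑ i ∈ s, w i * p i := by
  have hle : 1 ≤ z⁻¹ * ∑ i ∈ s, w i * p i :=
    calc 1 = ∑ i ∈ s, w i * (1 - Real.exp (-z⁻¹ * p i)) := h.symm
      _ ≤ ∑ i ∈ s, w i * (z⁻¹ * p i) := by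
        refine sum_le_sum fun i hi => mul_le_mul_of_nonneg_left ?_ (hw i hi)
        rw [neg_mul]
        linarith [Real.one_sub_le_exp_neg (z⁻¹ * p i)]
      _ = z⁻¹ * ∑ i ∈ s, w i * p i := by
        rw [mul_sum]; exact sum_congr rfl fun i _ => by ring
  simpa using (le_inv_mul_iff₀ hz).1 hle

lemma inv_sub_inv_le_of_sum_mul_one_sub_exp_eq_one (hw : ∀ i ∈ s, 0 ≤ w i)
    (hp : ∀ i ∈ s, 0 ≤ p i) (hz : 0 < z)
    (h : ∑ i ∈ s, w i * (1 - Real.exp (-z⁻¹ * p i)) = 1) :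
    z⁻¹ - (∑ i ∈ s, w i * p i)⁻¹ ≤
      (∑ i ∈ s, w i * p i ^ 2) / (2 * z ^ 2 * ∑ i ∈ s, w i * p i) := by
  set P := ∑ i ∈ s, w i * p i
  set Q := ∑ i ∈ s, w i * p i ^ 2
  have hzP : z ≤ P := le_sum_mul_of_sum_mul_one_sub_exp_eq_one hw hz h
  have hquad : z⁻¹ * P - (z⁻¹) ^ 2 / 2 * Q ≤ 1 :=
    calc z⁻¹ * P - (z⁻¹) ^ 2 / 2 * Q
        = ∑ i ∈ s, w i * (z⁻¹ * p i - (z⁻¹ * p i) ^ 2 / 2) := by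
          simp only [P, Q, mul_sum, ← sum_sub_distrib]
          exact sum_congr rfl fun i _ => by ring
      _ ≤ ∑ i ∈ s, w i * (1 - Real.exp (-z⁻¹ * p i)) := by
          refine sum_le_sum fun i hi => mul_le_mul_of_nonneg_left ?_ (hw i hi)
          have ht : 0 ≤ z⁻¹ * p i := mul_nonneg (inv_nonneg.2 hz.le) (hp i hi)
          rw [neg_mul]
          linarith [Real.exp_neg_le_one_sub_add_sq_div_two ht]
      _ = 1 := h
  have hP : 0 < P := hz.trans_le hzP
  have hcleared : z * P - Q / 2 ≤ z ^ 2 := by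
    have := mul_le_mul_of_nonneg_left hquad (sq_nonneg z)
    field_simp at this
    linarith
  rw [inv_sub_inv hz.ne' hP.ne', div_le_div_iff₀ (by positivity) (by positivity)]
  nlinarith [mul_le_mul_of_nonneg_right hcleared (mul_pos hz hP).le]

lemma sub_one_mul_le_of_sum_mul_one_sub_exp_eq_one (hw : ∀ i ∈ s, 0 ≤ w i)
    (hp : ∀ i ∈ s, 0 ≤ p i) (hz : 0 < z)
    (h : ∑ i ∈ s, w i * (1 - Real.exp (-z⁻¹ * p i)) = 1) {j : ι} (hj : j ∈ s) :
    (w j - 1) * p j ≤ z := by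
  set t := z⁻¹ * p j
  have ht : 0 ≤ t := mul_nonneg (inv_nonneg.2 hz.le) (hp j hj)
  have hterm : ∀ i ∈ s, 0 ≤ w i * (1 - Real.exp (-z⁻¹ * p i)) := fun i hi =>
    mul_nonneg (hw i hi) (by
      rw [neg_mul, sub_nonneg, Real.exp_le_one_iff, neg_nonpos]
      exact mul_nonneg (inv_nonneg.2 hz.le) (hp i hi))
  have hsingle : w j * (t / (1 + t)) ≤ 1 :=
    calc w j * (t / (1 + t)) ≤ w j * (1 - Real.exp (-z⁻¹ * p j)) := by
          rw [neg_mul]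
          exact mul_le_mul_of_nonneg_left (Real.div_one_add_le_one_sub_exp_neg ht) (hw j hj)
      _ ≤ ∑ i ∈ s, w i * (1 - Real.exp (-z⁻¹ * p i)) := single_le_sum hterm hj
      _ = 1 := h
  have hwt : (w j - 1) * t ≤ 1 := by
    rw [mul_div_assoc', div_le_one (by positivity)] at hsingle
    linarith
  calc (w j - 1) * p j = z * ((w j - 1) * t) := by simp only [t]; field_simp
    _ ≤ z := by nlinarith

end ExpEquation

section GeometricSums

variable {r : ℝ}

lemma sum_Icc_pow_le_of_one_lt (hr : 1 < r) (n : ℕ) :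
    ∑ i ∈ Icc 1 n, r ^ i ≤ r / (r - 1) * r ^ n := by
  rw [← Ico_add_one_right_eq_Icc, geom_sum_Ico hr.ne' (by omega), div_mul_eq_mul_div, ← pow_succ']
  gcongr
  linarith

lemma sum_Icc_pow_le_of_lt_one (hr₀ : 0 ≤ r) (hr : r < 1) (n : ℕ) :
    ∑ i ∈ Icc 1 n, r ^ i ≤ r / (1 - r) := by
  simpa [← Ico_add_one_right_eq_Icc] using geom_sum_Ico_le_of_lt_one (m := 1) (n := n + 1) hr₀ hr

end GeometricSums

section RpowIdentities

variable {x : ℝ}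

lemma rpow_neg_three_mul_mul (hx : 0 < x) (n : ℕ) (β : ℝ) :
    x ^ (-(3 * (n : ℝ)) * β) = (((x ^ β) ^ n) ^ 3)⁻¹ := by
  rw [← Real.rpow_mul_natCast hx.le, ← Real.rpow_mul_natCast hx.le, ← Real.rpow_neg hx.le]
  push_cast
  ring_nf

lemma rpow_pow_mul_rpow_neg_three_mul (hx : 0 < x) (n : ℕ) (d α : ℝ) :
    (x ^ (d - 2 * α)) ^ n * x ^ (-(3 * (n : ℝ)) * (d - α)) = x ^ (-(n : ℝ) * (2 * d - α)) := by
  rw [← Real.rpow_mul_natCast hx.le, ← Real.rpow_add hx]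
  ring_nf

end RpowIdentities

/-- `L^{id} - L^{(i-1)d}`, the number of points of `H^d_L` at distance exactly `L^i` from `0`. -/
def shellWeight (d L i : ℕ) : ℝ := ((L : ℝ) ^ d - 1) * (L : ℝ) ^ ((i - 1) * d)

/-- `ζ̃_n`: the solution of the equation for `ζ_n` linearised by `1 - exp (-t) ≈ t`. -/
def zetaTilde (d L : ℕ) (ρ : ℝ → ℝ) (n : ℕ) : ℝ :=
  ((L : ℝ) ^ d - 1) * ∑ i ∈ Icc 1 n, (L : ℝ) ^ ((i - 1) * d) * ρ ((L : ℝ) ^ i)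

section Hierarchical

variable {d L n : ℕ}

lemma mul_sum_pow_mul_eq_sum_shellWeight_mul (s : Finset ℕ) (f : ℕ → ℝ) :
    ((L : ℝ) ^ d - 1) * ∑ i ∈ s, (L : ℝ) ^ ((i - 1) * d) * f i =
      ∑ i ∈ s, shellWeight d L i * f i := by
  simp only [mul_sum, shellWeight, mul_assoc]

lemma sum_shellWeight (d L n : ℕ) :
    ∑ i ∈ Icc 1 n, shellWeight d L i = (L : ℝ) ^ (n * d) - 1 := by
  induction n with
  | zero => simp
  | succ n ih =>
    rw [sum_Icc_succ_top (by omega), ih, shellWeight, Nat.add_sub_cancel, add_mul, one_mul,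
      pow_add]
    ring

lemma shellWeight_nonneg (hL : 1 ≤ L) (i : ℕ) : 0 ≤ shellWeight d L i := by
  have : (1 : ℝ) ≤ (L : ℝ) ^ d := one_le_pow₀ (by exact_mod_cast hL)
  unfold shellWeight
  exact mul_nonneg (by linarith) (by positivity)

lemma two_le_shellWeight (hd : 1 ≤ d) (hL : 2 ≤ L) {i : ℕ} (hi : 2 ≤ i) :
    2 ≤ shellWeight d L i := by
  have hL' : (2 : ℝ) ≤ L := by exact_mod_cast hL
  have hpow : ∀ {k : ℕ}, 1 ≤ k → (2 : ℝ) ≤ (L : ℝ) ^ k := fun hk =>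
    hL'.trans (le_self_pow₀ (by linarith) (by omega))
  have h₁ := hpow hd
  have h₂ := hpow (Nat.one_le_iff_ne_zero.2 (Nat.mul_ne_zero (by omega) (by omega)) :
    1 ≤ (i - 1) * d)
  unfold shellWeight
  nlinarith

lemma shellWeight_mul_rpow_neg (hL : 0 < L) {i : ℕ} (hi : 1 ≤ i) (β : ℝ) :
    shellWeight d L i * ((L : ℝ) ^ i) ^ (-β) =
      ((L : ℝ) ^ d - 1) / (L : ℝ) ^ d * ((L : ℝ) ^ ((d : ℝ) - β)) ^ i := by
  have hL' : (0 : ℝ) < L := by exact_mod_cast hL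
  have hsplit : (L : ℝ) ^ ((d : ℝ) - β) = (L : ℝ) ^ d * (L : ℝ) ^ (-β) := by
    rw [sub_eq_add_neg, Real.rpow_add hL', Real.rpow_natCast]
  have hexp : (L : ℝ) ^ ((i - 1) * d) * (L : ℝ) ^ d = ((L : ℝ) ^ d) ^ i := by
    rw [← pow_add, ← pow_mul, ← Nat.succ_mul, Nat.succ_eq_add_one, Nat.sub_add_cancel hi,
      mul_comm]
  rw [hsplit, mul_pow, ← hexp, ← Real.rpow_natCast_mul hL'.le, mul_comm (i : ℝ),
    Real.rpow_mul_natCast hL'.le, shellWeight]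
  field_simp

variable {ρ : ℝ → ℝ} {z : ℝ}

lemma zetaTilde_eq_sum (d L : ℕ) (ρ : ℝ → ℝ) (n : ℕ) :
    zetaTilde d L ρ n = ∑ i ∈ Icc 1 n, shellWeight d L i * ρ ((L : ℝ) ^ i) :=
  mul_sum_pow_mul_eq_sum_shellWeight_mul _ _

lemma zetaEq.sum_shellWeight_mul_one_sub_exp (h : zetaEq d L ρ n z) :
    ∑ i ∈ Icc 1 n, shellWeight d L i * (1 - Real.exp (-z⁻¹ * ρ ((L : ℝ) ^ i))) = 1 := by
  rw [zetaEq, mul_sum_pow_mul_eq_sum_shellWeight_mul] at h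
  simp only [mul_sub, mul_one, sum_sub_distrib, sum_shellWeight]
  linarith

lemma zetaEq.le_zetaTilde (hL : 1 ≤ L) (hz : 0 < z) (h : zetaEq d L ρ n z) :
    z ≤ zetaTilde d L ρ n :=
  zetaTilde_eq_sum d L ρ n ▸ le_sum_mul_of_sum_mul_one_sub_exp_eq_one
    (fun i _ => shellWeight_nonneg hL i) hz h.sum_shellWeight_mul_one_sub_exp

end Hierarchical

section Bounds

variable {d L n : ℕ} {ρ : ℝ → ℝ} {A1 A2 α z : ℝ}

lemma zetaEq.mul_rpow_pow_le (hd : 1 ≤ d) (hL : 2 ≤ L) (hρnn : ∀ r : ℝ, 0 ≤ r → 0 ≤ ρ r)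
    (hρlb : ∀ r : ℝ, 1 ≤ r → A1 * r ^ (-α) ≤ ρ r) (hn : 2 ≤ n) (hz : 0 < z)
    (h : zetaEq d L ρ n z) :
    A1 * ((L : ℝ) ^ d - 1) / (2 * (L : ℝ) ^ d) * ((L : ℝ) ^ ((d : ℝ) - α)) ^ n ≤ z := by
  have hL1 : (1 : ℝ) ≤ (L : ℝ) ^ n := one_le_pow₀ (by exact_mod_cast (by omega : 1 ≤ L))
  have hρn : 0 ≤ ρ ((L : ℝ) ^ n) := hρnn _ (by positivity)
  have hw : 2 ≤ shellWeight d L n := two_le_shellWeight hd hL hn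
  calc A1 * ((L : ℝ) ^ d - 1) / (2 * (L : ℝ) ^ d) * ((L : ℝ) ^ ((d : ℝ) - α)) ^ n
      = shellWeight d L n * (A1 * ((L : ℝ) ^ n) ^ (-α)) / 2 := by
        rw [mul_left_comm, shellWeight_mul_rpow_neg (by omega) (by omega)]
        ring
    _ ≤ shellWeight d L n * ρ ((L : ℝ) ^ n) / 2 := by gcongr; exact hρlb _ hL1
    _ ≤ (shellWeight d L n - 1) * ρ ((L : ℝ) ^ n) := by nlinarith
    _ ≤ z :=
      sub_one_mul_le_of_sum_mul_one_sub_exp_eq_one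
        (fun i _ => shellWeight_nonneg (by omega) i) (fun i _ => hρnn _ (by positivity)) hz
        h.sum_shellWeight_mul_one_sub_exp (mem_Icc.2 ⟨by omega, le_rfl⟩)

lemma sum_shellWeight_mul_sq_le (hL : 1 ≤ L) (hρnn : ∀ r : ℝ, 0 ≤ r → 0 ≤ ρ r)
    (hρub : ∀ r : ℝ, 1 ≤ r → ρ r ≤ A2 * r ^ (-α)) (n : ℕ) :
    ∑ i ∈ Icc 1 n, shellWeight d L i * ρ ((L : ℝ) ^ i) ^ 2 ≤
      A2 ^ 2 * (((L : ℝ) ^ d - 1) / (L : ℝ) ^ d) *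
        ∑ i ∈ Icc 1 n, ((L : ℝ) ^ ((d : ℝ) - 2 * α)) ^ i := by
  rw [mul_sum]
  refine sum_le_sum fun i hi => ?_
  have hLi : (1 : ℝ) ≤ (L : ℝ) ^ i := one_le_pow₀ (by exact_mod_cast hL)
  calc shellWeight d L i * ρ ((L : ℝ) ^ i) ^ 2
      ≤ shellWeight d L i * (A2 * ((L : ℝ) ^ i) ^ (-α)) ^ 2 := by
        gcongr
        · exact shellWeight_nonneg hL i
        · exact hρnn _ (by positivity)
        · exact hρub _ hLi
    _ = A2 ^ 2 * (shellWeight d L i * ((L : ℝ) ^ i) ^ (-(2 * α))) := by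
        rw [mul_pow, ← Real.rpow_mul_natCast (by positivity)]
        ring_nf
    _ = A2 ^ 2 * (((L : ℝ) ^ d - 1) / (L : ℝ) ^ d) * ((L : ℝ) ^ ((d : ℝ) - 2 * α)) ^ i := by
        rw [shellWeight_mul_rpow_neg (by omega) (mem_Icc.1 hi).1, mul_assoc]

lemma exists_inv_sub_inv_zetaTilde_le (hd : 1 ≤ d) (hL : 2 ≤ L) (hA1 : 0 < A1)
    (hA12 : A1 ≤ A2) (hρnn : ∀ r : ℝ, 0 ≤ r → 0 ≤ ρ r)
    (hρlb : ∀ r : ℝ, 1 ≤ r → A1 * r ^ (-α) ≤ ρ r)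
    (hρub : ∀ r : ℝ, 1 ≤ r → ρ r ≤ A2 * r ^ (-α))
    {ζ : ℕ → ℝ} (hζpos : ∀ n : ℕ, 1 ≤ n → 0 < ζ n) (hζeq : ∀ n : ℕ, 1 ≤ n → zetaEq d L ρ n (ζ n)) :
    ∃ C > 0, ∀ n : ℕ, 2 ≤ n →
      (ζ n)⁻¹ - (zetaTilde d L ρ n)⁻¹ ≤
        C * (∑ i ∈ Icc 1 n, ((L : ℝ) ^ ((d : ℝ) - 2 * α)) ^ i) *
          (L : ℝ) ^ (-(3 * (n : ℝ)) * ((d : ℝ) - α)) := by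
  have hL0 : (0 : ℝ) < L := by positivity
  have hLd : (1 : ℝ) < (L : ℝ) ^ d :=
    one_lt_pow₀ (by exact_mod_cast (by omega : 1 < L)) (by omega)
  set a := A1 * ((L : ℝ) ^ d - 1) / (2 * (L : ℝ) ^ d)
  set K := A2 ^ 2 * (((L : ℝ) ^ d - 1) / (L : ℝ) ^ d)
  have ha : 0 < a := div_pos (mul_pos hA1 (by linarith)) (by positivity)
  have hK : 0 < K := mul_pos (pow_pos (hA1.trans_le hA12) 2) (div_pos (by linarith) (by positivity))
  refine ⟨K / (2 * a ^ 3), by positivity, fun n hn => ?_⟩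
  have hz : 0 < ζ n := hζpos n (by omega)
  have h : zetaEq d L ρ n (ζ n) := hζeq n (by omega)
  set s := (L : ℝ) ^ ((d : ℝ) - α)
  have hlow : a * s ^ n ≤ ζ n := h.mul_rpow_pow_le hd hL hρnn hρlb hn hz
  have hupp : ζ n ≤ zetaTilde d L ρ n := h.le_zetaTilde (by omega) hz
  have has : 0 < a * s ^ n := by positivity
  rw [rpow_neg_three_mul_mul hL0]
  calc (ζ n)⁻¹ - (zetaTilde d L ρ n)⁻¹
      ≤ (∑ i ∈ Icc 1 n, shellWeight d L i * ρ ((L : ℝ) ^ i) ^ 2) /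
          (2 * ζ n ^ 2 * zetaTilde d L ρ n) := by
        rw [zetaTilde_eq_sum]
        exact inv_sub_inv_le_of_sum_mul_one_sub_exp_eq_one
          (fun i _ => shellWeight_nonneg (by omega) i) (fun i _ => hρnn _ (by positivity)) hz
          h.sum_shellWeight_mul_one_sub_exp
    _ ≤ K * (∑ i ∈ Icc 1 n, ((L : ℝ) ^ ((d : ℝ) - 2 * α)) ^ i) /
          (2 * (a * s ^ n) ^ 2 * (a * s ^ n)) := by
        gcongr
        · exact sum_shellWeight_mul_sq_le (by omega) hρnn hρub n
        · exact hlow.trans hupp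
    _ = K / (2 * a ^ 3) * (∑ i ∈ Icc 1 n, ((L : ℝ) ^ ((d : ℝ) - 2 * α)) ^ i) *
          ((s ^ n) ^ 3)⁻¹ := by
        field_simp

end Bounds

theorem zeta_inv_minus_tilde_zeta_inv_bounds_general
    (d L : ℕ) (hd : 1 ≤ d) (hL : 2 ≤ L)
    (A1 A2 α : ℝ) (hA1 : 0 < A1) (hA12 : A1 ≤ A2)
    (ρ : ℝ → ℝ)
    (hρnn : ∀ r : ℝ, 0 ≤ r → 0 ≤ ρ r)
    (hρlb : ∀ r : ℝ, 1 ≤ r → A1 * r ^ (-α) ≤ ρ r)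
    (hρub : ∀ r : ℝ, 1 ≤ r → ρ r ≤ A2 * r ^ (-α))
    (ζ : ℕ → ℝ) (hζpos : ∀ n : ℕ, 1 ≤ n → 0 < ζ n)
    (hζeq : ∀ n : ℕ, 1 ≤ n → zetaEq d L ρ n (ζ n))
 :
    (∀ n : ℕ, 1 ≤ n →
      0 ≤ (ζ n)⁻¹ -
        (((L : ℝ) ^ d - 1) *
          ∑ i ∈ Finset.Icc 1 n, (L : ℝ) ^ ((i - 1) * d) * ρ ((L : ℝ) ^ i))⁻¹) ∧
    ∃ C : ℝ, 0 < C ∧ ∃ n₀ : ℕ, 1 ≤ n₀ ∧ ∀ n : ℕ, n₀ ≤ n →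
      (let diff : ℝ := (ζ n)⁻¹ -
        (((L : ℝ) ^ d - 1) *
          ∑ i ∈ Finset.Icc 1 n, (L : ℝ) ^ ((i - 1) * d) * ρ ((L : ℝ) ^ i))⁻¹;
      (α < (d : ℝ) / 2 → diff ≤ C * (L : ℝ) ^ (-(n : ℝ) * (2 * (d : ℝ) - α))) ∧
      (α = (d : ℝ) / 2 → diff ≤ C * (n : ℝ) * (L : ℝ) ^ (-(3 * (n : ℝ)) * ((d : ℝ) - α))) ∧
      ((d : ℝ) / 2 < α → diff ≤ C * (L : ℝ) ^ (-(3 * (n : ℝ)) * ((d : ℝ) - α)))) := by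
  refine ⟨fun n hn => sub_nonneg.2 <|
    inv_anti₀ (hζpos n hn) ((hζeq n hn).le_zetaTilde (by omega) (hζpos n hn)), ?_⟩
  obtain ⟨C, hC, hbound⟩ :=
    exists_inv_sub_inv_zetaTilde_le hd hL hA1 hA12 hρnn hρlb hρub hζpos hζeq
  have hL1 : (1 : ℝ) < L := by exact_mod_cast hL
  set r := (L : ℝ) ^ ((d : ℝ) - 2 * α)
  have hr : 0 < r := by positivity
  rcases lt_trichotomy α ((d : ℝ) / 2) with hα | hα | hα
  · have hr1 : 1 < r := Real.one_lt_rpow hL1 (by linarith)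
    refine ⟨C * (r / (r - 1)), mul_pos hC (div_pos hr (by linarith)), 2, by norm_num,
      fun n hn => ⟨fun _ => ?_, fun _ => by linarith, fun _ => by linarith⟩⟩
    calc _ ≤ C * (∑ i ∈ Icc 1 n, r ^ i) * (L : ℝ) ^ (-(3 * (n : ℝ)) * ((d : ℝ) - α)) :=
          hbound n hn
      _ ≤ C * (r / (r - 1) * r ^ n) * (L : ℝ) ^ (-(3 * (n : ℝ)) * ((d : ℝ) - α)) := by
          gcongr; exact sum_Icc_pow_le_of_one_lt hr1 n
      _ = _ := by rw [← rpow_pow_mul_rpow_neg_three_mul (by positivity)]; ring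
  · have hr1 : r = 1 := by simp only [r, show (d : ℝ) - 2 * α = 0 by linarith, Real.rpow_zero]
    refine ⟨C, hC, 2, by norm_num,
      fun n hn => ⟨fun _ => by linarith, fun _ => ?_, fun _ => by linarith⟩⟩
    calc _ ≤ C * (∑ i ∈ Icc 1 n, r ^ i) * (L : ℝ) ^ (-(3 * (n : ℝ)) * ((d : ℝ) - α)) :=
          hbound n hn
      _ = _ := by simp [hr1]
  · have hr1 : r < 1 := Real.rpow_lt_one_of_one_lt_of_neg hL1 (by linarith)
    refine ⟨C * (r / (1 - r)), mul_pos hC (div_pos hr (by linarith)), 2, by norm_num,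
      fun n hn => ⟨fun _ => by linarith, fun _ => by linarith, fun _ => ?_⟩⟩
    calc _ ≤ C * (∑ i ∈ Icc 1 n, r ^ i) * (L : ℝ) ^ (-(3 * (n : ℝ)) * ((d : ℝ) - α)) :=
          hbound n hn
      _ ≤ _ := by gcongr; exact sum_Icc_pow_le_of_lt_one hr.le hr1 n

/-- With `ζ̃_n = (L^d - 1) ∑_{i=1}^n L^{(i-1)d} ρ(L^i)`, one has
`0 ≤ ζ_n⁻¹ - ζ̃_n⁻¹`, with the stated quantitative upper bounds. -/
theorem zeta_inv_minus_tilde_zeta_inv_bounds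
    (d L : ℕ) (hd : 1 ≤ d) (hL : 2 ≤ L)
    (A1 A2 α : ℝ) (hA1 : 0 < A1) (hA12 : A1 ≤ A2)
    (hα0 : 0 < α) (hαd : α < (d : ℝ))
    (ρ : ℝ → ℝ) (hρ0 : ρ 0 = 0)
    (hρnn : ∀ r : ℝ, 0 ≤ r → 0 ≤ ρ r)
    (hρlb : ∀ r : ℝ, 1 ≤ r → A1 * r ^ (-α) ≤ ρ r)
    (hρub : ∀ r : ℝ, 1 ≤ r → ρ r ≤ A2 * r ^ (-α))
    (ζ : ℕ → ℝ) (hζpos : ∀ n : ℕ, 1 ≤ n → 0 < ζ n)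
    (hζeq : ∀ n : ℕ, 1 ≤ n → zetaEq d L ρ n (ζ n))
 :
    (∀ n : ℕ, 1 ≤ n →
      0 ≤ (ζ n)⁻¹ -
        (((L : ℝ) ^ d - 1) *
          ∑ i ∈ Finset.Icc 1 n, (L : ℝ) ^ ((i - 1) * d) * ρ ((L : ℝ) ^ i))⁻¹) ∧
    ∃ C : ℝ, 0 < C ∧ ∃ n₀ : ℕ, 1 ≤ n₀ ∧ ∀ n : ℕ, n₀ ≤ n →
      (let diff : ℝ := (ζ n)⁻¹ -
        (((L : ℝ) ^ d - 1) *
          ∑ i ∈ Finset.Icc 1 n, (L : ℝ) ^ ((i - 1) * d) * ρ ((L : ℝ) ^ i))⁻¹;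
      (α < (d : ℝ) / 2 → diff ≤ C * (L : ℝ) ^ (-(n : ℝ) * (2 * (d : ℝ) - α))) ∧
      (α = (d : ℝ) / 2 → diff ≤ C * (n : ℝ) * (L : ℝ) ^ (-(3 * (n : ℝ)) * ((d : ℝ) - α))) ∧
      ((d : ℝ) / 2 < α → diff ≤ C * (L : ℝ) ^ (-(3 * (n : ℝ)) * ((d : ℝ) - α)))) :=
  zeta_inv_minus_tilde_zeta_inv_bounds_general d L hd hL A1 A2 α hA1 hA12 ρ hρnn hρlb hρub ζ hζpos
    hζeq

end
end
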